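/- arXiv:1908.03666 — 5 statements merged into one kernel-verified Lean document; each statement's English description precedes it below -/
import Mathlib

section
/- For every λ > 0, α > 0 and t > 0, the function t ↦ E_{α,1}(-λ t^α) is differentiable at t and its derivative equals -λ t^{α-1} E_{α,α}(-λ t^α). -/
open Real

/-- The two-parameter Mittag-Leffler function (real arguments),
with the convention `1/Γ = 0` at the poles of `Γ` (as in Mathlib's `Real.Gamma`). -/
noncomputable def mittagLeffler (α β x : ℝ) : ℝ :=
  ∑' k : ℕ, x ^ k / Real.Gamma ((k : ℝ) * α + β)

/-!
`E_{α,1}` is a power series with coefficients `1 / Γ(kα + 1)`. Log-convexity of `Γ` gives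
`Γ(y + α) ≥ (y - 1)^α Γ(y)`, so consecutive coefficients have ratio `O(k^{-α}) → 0`: the series
is entire and may be differentiated termwise. Since `Γ((k + 1)α + 1) = (k + 1) α Γ(kα + α)`, the
differentiated series is `E_{α,α} / α`, and the chain rule with `d/dt (-λ t^α) = -λ α t^{α-1}`
finishes the proof.
-/

open Filter Topology

theorem Real.sub_one_rpow_mul_Gamma_le_Gamma_add {x α : ℝ} (hx : 1 < x) (hα : 0 < α) :
    (x - 1) ^ α * Gamma x ≤ Gamma (x + α) := by
  have hx₀ : 0 < x - 1 := sub_pos.mpr hx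
  have hΓ₀ : 0 < Gamma (x - 1) := Gamma_pos_of_pos hx₀
  have hΓ : 0 < Gamma x := Gamma_pos_of_pos (by linarith)
  have hΓα : 0 < Gamma (x + α) := Gamma_pos_of_pos (by linarith)
  -- `log ∘ Gamma` is convex and its slope on `[x - 1, x]` is `log (x - 1)`
  have hslope := convexOn_log_Gamma.slope_mono_adjacent (x := x - 1) (y := x) (z := x + α)
    (Set.mem_Ioi.mpr hx₀) (Set.mem_Ioi.mpr (by linarith)) (by linarith) (by linarith)
  have hlog : log (Gamma x) = log (x - 1) + log (Gamma (x - 1)) := by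
    rw [← log_mul hx₀.ne' hΓ₀.ne', ← Gamma_add_one hx₀.ne', sub_add_cancel]
  simp only [Function.comp_apply, sub_sub_cancel, div_one, add_sub_cancel_left] at hslope
  rw [hlog, add_sub_cancel_right, le_div_iff₀ hα, ← hlog] at hslope
  rw [← exp_log hΓα, ← exp_log hΓ, rpow_def_of_pos hx₀, ← exp_add]
  exact exp_le_exp.mpr (by linarith)

theorem tendsto_norm_inv_Gamma_ratio {α : ℝ} (hα : 0 < α) (β : ℝ) :
    Tendsto (fun n : ℕ => ‖(Gamma ((n + 1 : ℕ) * α + β))⁻¹‖ / ‖(Gamma (n * α + β))⁻¹‖) atTop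
      (𝓝 0) := by
  have harg : Tendsto (fun n : ℕ => n * α + β - 1) atTop atTop :=
    tendsto_atTop_add_const_right _ _
      (tendsto_atTop_add_const_right _ _ (tendsto_natCast_atTop_atTop.atTop_mul_const hα))
  refine tendsto_of_tendsto_of_tendsto_of_le_of_le' tendsto_const_nhds
    ((tendsto_rpow_neg_atTop hα).comp harg) (Eventually.of_forall fun n => by positivity) ?_
  filter_upwards [harg.eventually_gt_atTop 0] with n hn
  have hsucc : ((n + 1 : ℕ) : ℝ) * α + β = n * α + β + α := by push_cast; ring
  set y := (n : ℝ) * α + β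
  have hΓ : 0 < Gamma y := Gamma_pos_of_pos (by linarith)
  have hpow : 0 < (y - 1) ^ α := rpow_pos_of_pos hn α
  have hbound := sub_one_rpow_mul_Gamma_le_Gamma_add (by linarith : 1 < y) hα
  have hΓα : 0 < Gamma (y + α) := (mul_pos hpow hΓ).trans_le hbound
  rw [hsucc, norm_inv, norm_inv, Real.norm_of_nonneg hΓ.le, Real.norm_of_nonneg hΓα.le,
    Function.comp_apply, rpow_neg hn.le, inv_div_inv, div_le_iff₀ hΓα]
  field_simp
  linarith

section EntireSeries

variable {c : ℕ → ℝ}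

theorem summable_norm_mul_pow_of_tendsto_ratio (hc₀ : ∀ᶠ n in atTop, c n ≠ 0)
    (hc : Tendsto (fun n => ‖c (n + 1)‖ / ‖c n‖) atTop (𝓝 0)) {R : ℝ} (hR : 0 < R) :
    Summable fun n => ‖c n‖ * R ^ n := by
  refine summable_of_ratio_test_tendsto_lt_one zero_lt_one ?_ ?_
  · filter_upwards [hc₀] with n hn
    positivity
  · have h := hc.mul_const R
    rw [zero_mul] at h
    refine h.congr' ?_
    filter_upwards [hc₀] with n hn
    have : 0 < ‖c n‖ := norm_pos_iff.mpr hn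
    rw [norm_mul, norm_mul, norm_norm, norm_norm, norm_pow, norm_pow, Real.norm_of_nonneg hR.le,
      pow_succ]
    field_simp

theorem hasDerivAt_tsum_mul_pow_of_tendsto_ratio (hc₀ : ∀ᶠ n in atTop, c n ≠ 0)
    (hc : Tendsto (fun n => ‖c (n + 1)‖ / ‖c n‖) atTop (𝓝 0)) (x : ℝ) :
    HasDerivAt (fun y => ∑' n, c n * y ^ n) (∑' n, (n + 1) * c (n + 1) * x ^ n) x := by
  set R := |x| + 1
  have hR : 1 ≤ R := le_add_of_nonneg_left (abs_nonneg x)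
  have hx : x ∈ Metric.ball (0 : ℝ) R := by simp [R]
  -- `n R^(n - 1) ≤ (2R)^n` dominates the differentiated series on the ball
  have hbound : ∀ n, ∀ y ∈ Metric.ball (0 : ℝ) R,
      ‖c n * (n * y ^ (n - 1))‖ ≤ ‖c n‖ * (2 * R) ^ n := by
    intro n y hy
    have hy : |y| ≤ R := by simpa using (Metric.mem_ball.mp hy).le
    rw [norm_mul, norm_mul, norm_pow, Real.norm_natCast, Real.norm_eq_abs, mul_pow]
    gcongr
    · exact_mod_cast Nat.lt_two_pow_self.le
    · exact (pow_le_pow_left₀ (abs_nonneg y) hy _).trans (pow_le_pow_right₀ hR (Nat.sub_le n 1))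
  have hu := summable_norm_mul_pow_of_tendsto_ratio hc₀ hc (by linarith : (0 : ℝ) < 2 * R)
  have hderiv := hasDerivAt_tsum_of_isPreconnected hu Metric.isOpen_ball
    (convex_ball (0 : ℝ) R).isPreconnected (fun n y _ => (hasDerivAt_pow n y).const_mul (c n))
    hbound (Metric.mem_ball_self (by linarith))
    (hasSum_single 0 fun n hn => by simp [hn]).summable hx
  rw [(Summable.of_norm_bounded hu fun n => hbound n x hx).tsum_eq_zero_add] at hderiv
  simpa [mul_comm, mul_left_comm, mul_assoc] using hderiv

end EntireSeries

theorem hasDerivAt_mittagLeffler_one_id {α : ℝ} (hα : 0 < α) (x : ℝ) :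
    HasDerivAt (mittagLeffler α 1) (mittagLeffler α α x / α) x := by
  have hΓ : ∀ n : ℕ, 0 < Gamma (n * α + 1) := fun n => Gamma_pos_of_pos (by positivity)
  have h := hasDerivAt_tsum_mul_pow_of_tendsto_ratio
    (Eventually.of_forall fun n => inv_ne_zero (hΓ n).ne') (tendsto_norm_inv_Gamma_ratio hα 1) x
  convert h using 1
  · funext y
    simp only [mittagLeffler, div_eq_inv_mul]
  · rw [mittagLeffler, ← tsum_div_const]
    refine tsum_congr fun n => ?_
    have hpos : 0 < (n : ℝ) * α + α := by positivity
    rw [Nat.cast_succ, show ((n : ℝ) + 1) * α + 1 = (n * α + α) + 1 by ring,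
      Gamma_add_one hpos.ne']
    have := (Gamma_pos_of_pos hpos).ne'
    field_simp

theorem hasDerivAt_mittagLeffler_one_general (α lam t : ℝ)
    (hα : 0 < α) (ht : 0 < t) :
    HasDerivAt (fun s : ℝ => mittagLeffler α 1 (-lam * s ^ α))
      (-lam * t ^ (α - 1) * mittagLeffler α α (-lam * t ^ α)) t := by
  have hinner : HasDerivAt (fun s : ℝ => -lam * s ^ α) (-lam * (α * t ^ (α - 1))) t :=
    (hasDerivAt_rpow_const (Or.inl ht.ne')).const_mul (-lam)
  refine ((hasDerivAt_mittagLeffler_one_id hα _).comp t hinner).congr_deriv ?_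
  field_simp

theorem hasDerivAt_mittagLeffler_one (α lam t : ℝ)
    (hα : 0 < α) (hlam : 0 < lam) (ht : 0 < t) :
    HasDerivAt (fun s : ℝ => mittagLeffler α 1 (-lam * s ^ α))
      (-lam * t ^ (α - 1) * mittagLeffler α α (-lam * t ^ α)) t :=
  hasDerivAt_mittagLeffler_one_general α lam t hα ht
end

section
/- For every α > 0, λ ∈ ℝ and z > 0, the function z ↦ z^{α-1} E_{α,α}(-λ z^α) is differentiable at z and its derivative equals z^{α-2} E_{α,α-1}(-λ z^α). -/
/-! By the product and chain rules the claim reduces, with `w = -λ z^α`, to the identity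
`E_{α,β-1}(w) = (β - 1) E_{α,β}(w) + α w E_{α,β}'(w)` at `β = α`, which holds termwise
since `(kα + β - 1) / Γ(kα + β) = 1 / Γ(kα + β - 1)`. Termwise differentiation of
`E_{α,β}` is justified by the ratio test: log-convexity of `Γ` gives
`Γ(x + a) ≥ Γ(x) (x + a - 1)^a` for `0 < a ≤ 1`, hence `Γ(x) / Γ(x + α) → 0`. -/

open Real

open Filter Topology

namespace Real

-- Also at the poles of `Γ`, where both sides vanish.
theorem div_Gamma_add_one (s : ℝ) : s / Gamma (s + 1) = (Gamma s)⁻¹ := by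
  rcases eq_or_ne s 0 with rfl | hs
  · simp
  rw [Gamma_add_one hs, div_mul_eq_div_div, div_self hs, one_div]

theorem Gamma_mul_rpow_le_Gamma_add {a x : ℝ} (ha : 0 < a) (ha1 : a ≤ 1) (hx : 1 - a < x) :
    Gamma x * (x + a - 1) ^ a ≤ Gamma (x + a) := by
  have hs : 0 < x + a - 1 := by linarith
  have hΓs : 0 < Gamma (x + a - 1) := Gamma_pos_of_pos hs
  have hΓx : 0 < Gamma x := Gamma_pos_of_pos (by linarith)
  have hrec : Gamma (x + a) = (x + a - 1) * Gamma (x + a - 1) := by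
    rw [← Gamma_add_one hs.ne', sub_add_cancel]
  have hconv := convexOn_log_Gamma.2 (Set.mem_Ioi.mpr hs)
    (Set.mem_Ioi.mpr (by linarith : 0 < x + a)) ha.le (by linarith : 0 ≤ 1 - a) (by ring)
  simp only [Function.comp_apply, smul_eq_mul, hrec, log_mul hs.ne' hΓs.ne',
    show a * (x + a - 1) + (1 - a) * (x + a) = x by ring] at hconv
  rw [← log_le_log_iff (mul_pos hΓx (rpow_pos_of_pos hs a)) (Gamma_pos_of_pos (by linarith)),
    log_mul hΓx.ne' (by positivity), log_rpow hs, hrec, log_mul hs.ne' hΓs.ne']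
  nlinarith

theorem tendsto_Gamma_div_Gamma_add_atTop {α : ℝ} (hα : 0 < α) :
    Tendsto (fun x => Gamma x / Gamma (x + α)) atTop (𝓝 0) := by
  set a := min α 1
  have ha : 0 < a := lt_min hα one_pos
  have hbound : Tendsto (fun x : ℝ => (x + (a - 1)) ^ (-a)) atTop (𝓝 0) :=
    (tendsto_rpow_neg_atTop ha).comp (tendsto_atTop_add_const_right _ (a - 1) tendsto_id)
  refine tendsto_of_tendsto_of_tendsto_of_le_of_le' tendsto_const_nhds hbound ?_ ?_
  · filter_upwards [eventually_gt_atTop 0] with x hx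
    exact div_nonneg (Gamma_pos_of_pos hx).le (Gamma_pos_of_pos (by linarith)).le
  filter_upwards [eventually_ge_atTop 2] with x hx
  have hs : 0 < x + a - 1 := by linarith [min_le_right α 1]
  have hmono : Gamma (x + a) ≤ Gamma (x + α) :=
    Gamma_strictMonoOn_Ici.monotoneOn (by simp; linarith) (by simp; linarith) (by simp [a])
  rw [← add_sub_assoc, rpow_neg hs.le, div_le_iff₀ (Gamma_pos_of_pos (by linarith)),
    ← div_eq_inv_mul, le_div_iff₀ (by positivity)]
  exact (Gamma_mul_rpow_le_Gamma_add ha (min_le_right _ _) (by linarith)).trans hmono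

theorem summable_natCast_pow_mul_pow_div_Gamma {α : ℝ} (hα : 0 < α) (β r : ℝ) (m : ℕ) :
    Summable fun k : ℕ => (k : ℝ) ^ m * r ^ k / Gamma (k * α + β) := by
  rcases eq_or_ne r 0 with rfl | hr
  · exact summable_of_ne_finset_zero (s := {0}) fun k hk => by simp_all
  have harg : Tendsto (fun k : ℕ => k * α + β) atTop atTop :=
    tendsto_atTop_add_const_right _ β (tendsto_natCast_atTop_atTop.atTop_mul_const hα)
  refine summable_of_ratio_test_tendsto_lt_one zero_lt_one ?_ ?_
  · filter_upwards [harg.eventually_gt_atTop 0, eventually_ne_atTop 0] with k hk hk0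
    exact div_ne_zero (mul_ne_zero (pow_ne_zero _ (Nat.cast_ne_zero.2 hk0)) (pow_ne_zero _ hr))
      (Gamma_pos_of_pos hk).ne'
  have hlim : Tendsto (fun k : ℕ => (1 + 1 / (k : ℝ)) ^ m * |r| *
      (Gamma (k * α + β) / Gamma (k * α + β + α))) atTop (𝓝 ((1 + 0) ^ m * |r| * 0)) :=
    (((tendsto_const_nhds.add tendsto_one_div_atTop_nhds_zero_nat).pow m).mul
      tendsto_const_nhds).mul ((tendsto_Gamma_div_Gamma_add_atTop hα).comp harg)
  rw [mul_zero] at hlim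
  refine hlim.congr' ?_
  filter_upwards [harg.eventually_gt_atTop 0, eventually_ne_atTop 0] with k hk hk0
  have hk' : (k : ℝ) ≠ 0 := Nat.cast_ne_zero.2 hk0
  have hΓ : 0 < Gamma (k * α + β) := Gamma_pos_of_pos hk
  have hΓ' : 0 < Gamma (k * α + β + α) := Gamma_pos_of_pos (by linarith)
  rw [show ((k + 1 : ℕ) : ℝ) * α + β = k * α + β + α by push_cast; ring]
  simp only [norm_div, norm_mul, norm_pow, Real.norm_eq_abs, abs_of_pos hΓ, abs_of_pos hΓ',
    Nat.abs_cast, one_add_div hk', div_pow]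
  field_simp
  push_cast
  ring

end Real

theorem hasDerivAt_mittagLeffler {α : ℝ} (hα : 0 < α) (β w : ℝ) :
    HasDerivAt (mittagLeffler α β) (∑' k : ℕ, k * w ^ (k - 1) / Gamma (k * α + β)) w := by
  set R := |w| + 1
  have hR : 1 ≤ R := by simp [R]
  show HasDerivAt (fun y => ∑' k : ℕ, y ^ k / Gamma (k * α + β)) _ w
  refine hasDerivAt_tsum_of_isPreconnected (t := Metric.ball (0 : ℝ) R) (y₀ := 0)
    (g := fun k y => y ^ k / Gamma (k * α + β))
    (g' := fun k y => k * y ^ (k - 1) / Gamma (k * α + β))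
    (u := fun k : ℕ => |k * R ^ k / Gamma (k * α + β)|)
    (by simpa using (summable_natCast_pow_mul_pow_div_Gamma hα β R 1).abs) Metric.isOpen_ball
    (convex_ball (0 : ℝ) R).isPreconnected (fun k y _ => (hasDerivAt_pow k y).div_const _)
    (fun k y hy => ?_) (Metric.mem_ball_self (by linarith))
    (summable_of_ne_finset_zero (s := {0}) fun k hk => by simp_all) (by simp [R])
  have hy : |y| ≤ R := (mem_ball_zero_iff.1 hy).le
  simp only [Real.norm_eq_abs, abs_div, abs_mul, abs_pow, Nat.abs_cast,
    abs_of_nonneg (zero_le_one.trans hR)]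
  gcongr
  exact (pow_le_pow_left₀ (abs_nonneg y) hy _).trans (pow_le_pow_right₀ hR (Nat.sub_le k 1))

theorem mittagLeffler_sub_one {α : ℝ} (hα : 0 < α) (β w : ℝ) :
    mittagLeffler α (β - 1) w = (β - 1) * mittagLeffler α β w +
      α * w * ∑' k : ℕ, k * w ^ (k - 1) / Gamma (k * α + β) := by
  have hterm (k : ℕ) : w ^ k / Gamma (k * α + (β - 1)) =
      (β - 1) * (w ^ k / Gamma (k * α + β)) + α * (k * w ^ k / Gamma (k * α + β)) := by
    have := div_Gamma_add_one (k * α + β - 1)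
    rw [sub_add_cancel] at this
    rw [show (k : ℝ) * α + (β - 1) = k * α + β - 1 by ring, div_eq_mul_inv, ← this]
    ring
  have hshift (k : ℕ) :
      w * (k * w ^ (k - 1) / Gamma (k * α + β)) = k * w ^ k / Gamma (k * α + β) := by
    rcases k with _ | k
    · simp
    · rw [Nat.add_sub_cancel, pow_succ]
      ring
  have hsum₀ := summable_natCast_pow_mul_pow_div_Gamma hα β w 0
  have hsum₁ := summable_natCast_pow_mul_pow_div_Gamma hα β w 1
  simp only [pow_zero, one_mul, pow_one] at hsum₀ hsum₁
  rw [mittagLeffler, mittagLeffler, mul_assoc, ← tsum_mul_left (a := w)]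
  simp only [hshift]
  rw [← tsum_mul_left, ← tsum_mul_left, ← (hsum₀.mul_left _).tsum_add (hsum₁.mul_left _)]
  exact tsum_congr hterm

theorem hasDerivAt_rpow_mul_mittagLeffler (α lam z : ℝ) (hα : 0 < α) (hz : 0 < z) :
    HasDerivAt (fun x : ℝ => x ^ (α - 1) * mittagLeffler α α (-lam * x ^ α))
      (z ^ (α - 2) * mittagLeffler α (α - 1) (-lam * z ^ α)) z := by
  have hinner : HasDerivAt (fun x : ℝ => -lam * x ^ α) (-lam * (α * z ^ (α - 1))) z :=
    (hasDerivAt_rpow_const (Or.inl hz.ne')).const_mul _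
  have hprod : HasDerivAt (fun x : ℝ => x ^ (α - 1) * mittagLeffler α α (-lam * x ^ α)) _ z :=
    (hasDerivAt_rpow_const (Or.inl hz.ne')).mul ((hasDerivAt_mittagLeffler hα α _).comp z hinner)
  refine hprod.congr_deriv ?_
  have hpow : z ^ (α - 1) * z ^ (α - 1) = z ^ (α - 2) * z ^ α := by
    rw [← rpow_add hz, ← rpow_add hz]
    ring_nf
  rw [mittagLeffler_sub_one hα, sub_sub, one_add_one_eq_two]
  linear_combination
    (-lam * α * ∑' k : ℕ, k * (-lam * z ^ α) ^ (k - 1) / Gamma (k * α + α)) * hpow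
end

section
/- For 0 < α ≤ 1 and every x ≥ 0, E_{α,α}(-x) ≥ 0. -/
/-!
The Taylor coefficients `Tₙ(c)` of `1 / ((1 - z) ^ α + c)` are nonnegative for `|c| < 1`: since
`(1 - z) ^ α = 1 - ∑_{j ≥ 1} gⱼ zʲ` with `gⱼ ≥ 0` when `0 ≤ α ≤ 1`, they satisfy the recursion
`(1 + c) Tₙ = ∑_{j ≥ 1} gⱼ Tₙ₋ⱼ`. Expanding in `c`, `Tₙ(c) = ∑ₘ (-c) ^ m (α (m + 1))ₙ / n!`, and
`(s)ₙ / n! ~ n ^ (s - 1) / Γ(s)`, so the rescaled coefficients `n ^ (1 - α) Tₙ(x n ^ (-α))` converge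
to `∑ₘ (-x) ^ m / Γ(α (m + 1)) = E_{α,α}(-x)`. Dominated convergence applies because
`n ^ (1 - s) (s)ₙ / n!` is at most `2 ^ s / Γ(s)` for `s ≤ n` and at most `(4e / n) ^ s` for
`s ≥ n`.
-/

open Real

open Filter Finset Topology Polynomial

theorem ascPochhammer_eval_eq_prod_range {R : Type*} [CommSemiring R] (s : R) (n : ℕ) :
    (ascPochhammer R n).eval s = ∏ j ∈ range n, (s + j) := by
  induction n with
  | zero => simp
  | succ n ih => rw [ascPochhammer_succ_eval, ih, prod_range_succ]

theorem ascPochhammer_eval_nonneg {s : ℝ} (hs : 0 ≤ s) (n : ℕ) :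
    0 ≤ (ascPochhammer ℝ n).eval s := by
  induction n with
  | zero => simp
  | succ n ih => rw [ascPochhammer_succ_eval]; positivity

theorem ascPochhammer_eval_le_eval {s t : ℝ} (hs : 0 ≤ s) (hst : s ≤ t) (n : ℕ) :
    (ascPochhammer ℝ n).eval s ≤ (ascPochhammer ℝ n).eval t := by
  induction n with
  | zero => simp
  | succ n ih =>
    simp only [ascPochhammer_succ_eval]
    exact mul_le_mul ih (by linarith) (by positivity) ((ascPochhammer_eval_nonneg hs n).trans ih)

theorem ascPochhammer_eval_le_pow {s : ℝ} (hs : 0 ≤ s) (n : ℕ) :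
    (ascPochhammer ℝ n).eval s ≤ (s + n) ^ n := by
  calc (ascPochhammer ℝ n).eval s = ∏ j ∈ range n, (s + j) := ascPochhammer_eval_eq_prod_range s n
    _ ≤ ∏ _j ∈ range n, (s + n) := prod_le_prod (fun j _ => by positivity) fun j hj => by
        have : (j : ℝ) ≤ n := by exact_mod_cast (mem_range.mp hj).le
        linarith
    _ = (s + n) ^ n := by rw [prod_const, card_range]

theorem Ring.add_multichoose_eq {R : Type*} [CommRing R] [BinomialRing R] (r s : R) (k : ℕ) :
    multichoose (r + s) k =
      ∑ ij ∈ antidiagonal k, multichoose r ij.1 * multichoose s ij.2 := by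
  have h (x : R) (n : ℕ) : multichoose x n = Int.negOnePow n • choose (-x) n := by
    rw [choose_neg', smul_smul, ← Int.negOnePow_add, Int.negOnePow_even _ (by simp), one_smul]
  rw [h, neg_add, add_choose_eq k (Commute.all (-r) (-s)), smul_sum]
  refine sum_congr rfl fun ij hij => ?_
  rw [h, h, ← mem_antidiagonal.mp hij, Nat.cast_add, Int.negOnePow_add, smul_mul_smul_comm,
    mul_smul]

theorem Real.multichoose_eq_eval_div (s : ℝ) (n : ℕ) :
    Ring.multichoose s n = (ascPochhammer ℝ n).eval s / n.factorial := by
  rw [eq_div_iff (by positivity), mul_comm, ← nsmul_eq_mul,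
    Ring.factorial_nsmul_multichoose_eq_ascPochhammer, ascPochhammer_smeval_eq_eval]

theorem Real.multichoose_nonneg {s : ℝ} (hs : 0 ≤ s) (n : ℕ) : 0 ≤ Ring.multichoose s n := by
  rw [Real.multichoose_eq_eval_div]; have := ascPochhammer_eval_nonneg hs n; positivity

theorem Real.multichoose_mono {s t : ℝ} (hs : 0 ≤ s) (hst : s ≤ t) (n : ℕ) :
    Ring.multichoose s n ≤ Ring.multichoose t n := by
  simp only [Real.multichoose_eq_eval_div]
  gcongr
  exact ascPochhammer_eval_le_eval hs hst n

theorem Real.multichoose_natCast_succ (m n : ℕ) :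
    Ring.multichoose ((m + 1 : ℕ) : ℝ) n = ((m + n).choose n : ℕ) := by
  rw [Ring.multichoose_eq, ← Ring.choose_natCast]
  push_cast; ring_nf

theorem Real.neg_multichoose_neg_succ_nonneg {α : ℝ} (hα0 : 0 ≤ α) (hα1 : α ≤ 1) (j : ℕ) :
    0 ≤ -Ring.multichoose (-α) (j + 1) := by
  rw [Real.multichoose_eq_eval_div, ascPochhammer_succ_left, eval_mul, eval_X, eval_comp, eval_add,
    eval_X, eval_one, ← neg_div, ← neg_mul, neg_neg]
  have := ascPochhammer_eval_nonneg (by linarith : 0 ≤ -α + 1) j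
  positivity

theorem summable_pow_mul_multichoose {r : ℝ} (hr : |r| < 1) {f : ℕ → ℝ} (hf0 : ∀ m, 0 ≤ f m)
    (hf : ∀ m, f m ≤ m + 1) (n : ℕ) :
    Summable fun m => r ^ m * Ring.multichoose (f m) n := by
  refine .of_norm_bounded (summable_choose_mul_geometric_of_norm_lt_one n
    (r := |r|) (by rwa [norm_abs_eq_norm])) fun m => ?_
  rw [norm_mul, norm_pow, Real.norm_eq_abs, mul_comm, Real.norm_of_nonneg
    (Real.multichoose_nonneg (hf0 m) n), ← Real.multichoose_natCast_succ]
  gcongr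
  exact Real.multichoose_mono (hf0 m) (by push_cast; exact hf m) n

/-- Expanding `1 / ((1 - z) ^ α + c) = ∑ₘ (-c) ^ m (1 - z) ^ (-α (m + 1))`, this is its `n`-th
Taylor coefficient. -/
noncomputable def relaxationCoeff (α c : ℝ) (n : ℕ) : ℝ :=
  ∑' m : ℕ, (-c) ^ m * Ring.multichoose (α * (m + 1)) n

section relaxationCoeff

variable {α c : ℝ}

/-- The coefficient form of `(1 - z) ^ α * (1 / ((1 - z) ^ α + c)) = 1 - c / ((1 - z) ^ α + c)`. -/
theorem sum_antidiagonal_multichoose_neg_mul_relaxationCoeff (hα0 : 0 ≤ α) (hα1 : α ≤ 1)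
    (hc : |c| < 1) (n : ℕ) :
    ∑ ij ∈ antidiagonal n, Ring.multichoose (-α) ij.1 * relaxationCoeff α c ij.2 =
      Ring.multichoose (0 : ℝ) n - c * relaxationCoeff α c n := by
  have hc' : |-c| < 1 := by rwa [abs_neg]
  have hterms (k : ℕ) : Summable fun m : ℕ => (-c) ^ m * Ring.multichoose (α * (m + 1)) k :=
    summable_pow_mul_multichoose hc' (fun m => by positivity)
      (fun m => by nlinarith [Nat.cast_nonneg (α := ℝ) m]) k
  have hshift : Summable fun m : ℕ => (-c) ^ m * Ring.multichoose (α * m) n :=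
    summable_pow_mul_multichoose hc' (fun m => by positivity)
      (fun m => by nlinarith [Nat.cast_nonneg (α := ℝ) m]) n
  calc ∑ ij ∈ antidiagonal n, Ring.multichoose (-α) ij.1 * relaxationCoeff α c ij.2
      = ∑' m : ℕ, (-c) ^ m * ∑ ij ∈ antidiagonal n,
          Ring.multichoose (-α) ij.1 * Ring.multichoose (α * (m + 1)) ij.2 := by
        have hswap := Summable.tsum_finsetSum (s := antidiagonal n)
          (f := fun ij (m : ℕ) => Ring.multichoose (-α) ij.1 *
            ((-c) ^ m * Ring.multichoose (α * (m + 1)) ij.2))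
          fun ij _ => (hterms ij.2).mul_left (Ring.multichoose (-α) ij.1)
        simp only [tsum_mul_left] at hswap
        simp only [relaxationCoeff, ← hswap, mul_sum]
        exact tsum_congr fun m => sum_congr rfl fun ij _ => by ring
    _ = ∑' m : ℕ, (-c) ^ m * Ring.multichoose (α * m) n := by
        refine tsum_congr fun m => ?_
        rw [← Ring.add_multichoose_eq]
        congr 2
        ring
    _ = Ring.multichoose (0 : ℝ) n - c * relaxationCoeff α c n := by
        rw [hshift.tsum_eq_zero_add, relaxationCoeff, ← tsum_mul_left]
        push_cast
        simp only [pow_zero, mul_zero, one_mul, pow_succ]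
        rw [sub_eq_add_neg, ← tsum_neg]
        congr 1
        exact tsum_congr fun m => by ring

theorem relaxationCoeff_nonneg (hα0 : 0 ≤ α) (hα1 : α ≤ 1) (hc : |c| < 1) (n : ℕ) :
    0 ≤ relaxationCoeff α c n := by
  have hrec := sum_antidiagonal_multichoose_neg_mul_relaxationCoeff hα0 hα1 hc
  have h1c : 0 < 1 + c := by linarith [neg_abs_le c]
  induction n using Nat.strong_induction_on with
  | _ n ih =>
    cases n with
    | zero =>
      have h0 := hrec 0
      simp only [Nat.antidiagonal_zero, sum_singleton, Ring.multichoose_zero_right] at h0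
      nlinarith
    | succ n =>
      have hn := hrec (n + 1)
      rw [Nat.sum_antidiagonal_succ, Ring.multichoose_zero_succ, Ring.multichoose_zero_right] at hn
      have hsum : 0 ≤ ∑ ij ∈ antidiagonal n,
          -Ring.multichoose (-α) (ij.1 + 1) * relaxationCoeff α c ij.2 :=
        sum_nonneg fun ij hij => mul_nonneg (Real.neg_multichoose_neg_succ_nonneg hα0 hα1 ij.1)
          (ih _ (Nat.antidiagonal.snd_lt hij))
      simp only [neg_mul, sum_neg_distrib] at hsum
      nlinarith

end relaxationCoeff

/-- Convexity of `log ∘ Γ`: the slope over `[x, x + t]` is at most the slope `log (x + t)` over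
`[x + t, x + t + 1]`. -/
theorem Real.Gamma_add_le_mul_rpow {x t : ℝ} (hx : 0 < x) (ht : 0 ≤ t) :
    Gamma (x + t) ≤ Gamma x * (x + t) ^ t := by
  rcases ht.eq_or_lt with rfl | ht
  · simp
  have hxt : 0 < x + t := by linarith
  have hslope := convexOn_log_Gamma.slope_mono_adjacent (x := x) (y := x + t) (z := x + t + 1)
    hx (by simp only [Set.mem_Ioi]; linarith) (by linarith) (by linarith)
  simp only [Function.comp_apply, add_sub_cancel_left, div_one,
    Gamma_add_one hxt.ne', log_mul hxt.ne' (Gamma_pos_of_pos hxt).ne', add_sub_cancel_right]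
    at hslope
  rw [div_le_iff₀ ht] at hslope
  rw [← exp_log (Gamma_pos_of_pos hxt), ← exp_log (Gamma_pos_of_pos hx), rpow_def_of_pos hxt,
    ← exp_add]
  gcongr
  linarith

theorem Real.Gamma_add_natCast {s : ℝ} (hs : 0 < s) (n : ℕ) :
    Gamma (s + n) = Gamma s * (ascPochhammer ℝ n).eval s := by
  induction n with
  | zero => simp
  | succ n ih =>
    rw [Nat.cast_succ, ← add_assoc, Gamma_add_one (by positivity), ih, ascPochhammer_succ_eval]
    ring

theorem Real.multichoose_eq_Gamma {s : ℝ} (hs : 0 < s) (n : ℕ) :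
    Ring.multichoose s n = Gamma (s + n) / (Gamma s * n.factorial) := by
  rw [Real.multichoose_eq_eval_div, Gamma_add_natCast hs,
    mul_div_mul_left _ _ (Gamma_pos_of_pos hs).ne']

theorem Real.tendsto_Gamma_div_Gamma_add {α : ℝ} (hα0 : 0 < α) (hα1 : α ≤ 1) :
    Tendsto (fun s => Gamma s / Gamma (s + α)) atTop (𝓝 0) := by
  have hlim : Tendsto (fun s : ℝ => 2 * (s + 1) ^ (-α)) atTop (𝓝 0) := by
    simpa using ((tendsto_rpow_neg_atTop hα0).comp (tendsto_atTop_add_const_right _ 1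
      tendsto_id)).const_mul 2
  refine squeeze_zero' ?_ ?_ hlim
  · filter_upwards [eventually_gt_atTop 0] with s hs
    exact div_nonneg (Gamma_pos_of_pos hs).le (Gamma_pos_of_pos (by linarith)).le
  filter_upwards [eventually_ge_atTop 1] with s hs
  have hsα : 0 < s + α := by linarith
  have hstep : s * Gamma s ≤ Gamma (s + α) * (s + 1) ^ (1 - α) := by
    have := Gamma_add_le_mul_rpow hsα (by linarith : 0 ≤ 1 - α)
    rwa [show s + α + (1 - α) = s + 1 by ring, Gamma_add_one (by linarith)] at this
  rw [div_le_iff₀ (Gamma_pos_of_pos hsα)]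
  rw [show (s + 1) ^ (1 - α) = (s + 1) * (s + 1) ^ (-α) by
    rw [sub_eq_add_neg, rpow_add (by linarith), rpow_one]] at hstep
  have hpos : 0 ≤ Gamma (s + α) * (s + 1) ^ (-α) := by
    have := Gamma_pos_of_pos hsα; positivity
  nlinarith

theorem Real.summable_pow_div_Gamma {α : ℝ} (hα0 : 0 < α) (hα1 : α ≤ 1) (y : ℝ) :
    Summable fun m : ℕ => y ^ m / Gamma (α * (m + 1)) := by
  have hs : Tendsto (fun m : ℕ => α * ((m : ℝ) + 1)) atTop atTop :=
    (tendsto_atTop_add_const_right _ 1 tendsto_natCast_atTop_atTop).const_mul_atTop hα0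
  have hratio := ((tendsto_Gamma_div_Gamma_add hα0 hα1).comp hs).const_mul |y|
  rw [mul_zero] at hratio
  refine summable_of_ratio_norm_eventually_le (r := 1 / 2) (by norm_num) ?_
  filter_upwards [hratio.eventually (gt_mem_nhds (by norm_num : (0 : ℝ) < 1 / 2))] with m hm
  have hΓ := Gamma_pos_of_pos (by positivity : 0 < α * ((m : ℝ) + 1))
  have hΓ' := Gamma_pos_of_pos (by positivity : 0 < α * ((m : ℝ) + 1) + α)
  simp only [Function.comp_apply] at hm
  rw [show α * (((m + 1 : ℕ) : ℝ) + 1) = α * (m + 1) + α by push_cast; ring, norm_div, norm_div,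
    norm_pow, norm_pow, Real.norm_of_nonneg hΓ.le, Real.norm_of_nonneg hΓ'.le, Real.norm_eq_abs]
  calc |y| ^ (m + 1) / Gamma (α * (m + 1) + α)
      = |y| * (Gamma (α * (m + 1)) / Gamma (α * (m + 1) + α)) *
          (|y| ^ m / Gamma (α * (m + 1))) := by
        field_simp
        ring
    _ ≤ 1 / 2 * (|y| ^ m / Gamma (α * (m + 1))) := by gcongr

theorem tendsto_rpow_mul_multichoose {s : ℝ} (hs : 0 < s) :
    Tendsto (fun n : ℕ => (n : ℝ) ^ (1 - s) * Ring.multichoose s n) atTop (𝓝 (Gamma s)⁻¹) := by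
  have hlim := (tendsto_natCast_div_add_atTop s).div (GammaSeq_tendsto_Gamma s)
    (Gamma_pos_of_pos hs).ne'
  rw [one_div] at hlim
  refine hlim.congr' ?_
  filter_upwards [eventually_gt_atTop 0] with n hn
  have hn' : (0 : ℝ) < n := Nat.cast_pos.mpr hn
  have hprod : ∏ j ∈ range (n + 1), (s + j) = (ascPochhammer ℝ n).eval s * (n + s) := by
    rw [prod_range_succ, ascPochhammer_eval_eq_prod_range, add_comm s]
  have hP : 0 < (ascPochhammer ℝ n).eval s := ascPochhammer_pos n s hs
  rw [Pi.div_apply, Real.GammaSeq, hprod, Real.multichoose_eq_eval_div, rpow_sub hn', rpow_one]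
  have : (0 : ℝ) < n ^ s := by positivity
  field_simp

theorem rpow_mul_multichoose_le_of_le {s : ℝ} {n : ℕ} (hs : 0 < s) (hsn : s ≤ n) :
    (n : ℝ) ^ (1 - s) * Ring.multichoose s n ≤ 2 ^ s / Gamma s := by
  have hn : (0 : ℝ) < n := hs.trans_le hsn
  have hΓn := Gamma_pos_of_pos hn
  have hΓs := Gamma_pos_of_pos hs
  have hfac : (n.factorial : ℝ) = n * Gamma n := by
    rw [← Gamma_nat_eq_factorial, Gamma_add_one hn.ne']
  calc (n : ℝ) ^ (1 - s) * Ring.multichoose s n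
      = ((n : ℝ) ^ s)⁻¹ * (Gamma (n + s) / Gamma n) / Gamma s := by
        rw [Real.multichoose_eq_Gamma hs, hfac, rpow_sub hn, rpow_one, add_comm s]
        field_simp
    _ ≤ ((n : ℝ) ^ s)⁻¹ * (n + s) ^ s / Gamma s := by
        gcongr
        rw [div_le_iff₀ hΓn, mul_comm]
        exact Gamma_add_le_mul_rpow hn hs.le
    _ = ((n + s) / n) ^ s / Gamma s := by
        rw [div_rpow (by positivity) hn.le, inv_mul_eq_div]
    _ ≤ 2 ^ s / Gamma s := by
        gcongr
        rw [div_le_iff₀ hn]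
        linarith

theorem Real.multichoose_le_two_pow_mul_exp {s : ℝ} {n : ℕ} (hn : 0 < n) (hns : n ≤ s) :
    Ring.multichoose s n ≤ 2 ^ n * exp s := by
  have hn' : (0 : ℝ) < n := Nat.cast_pos.mpr hn
  have hs : 0 < s := hn'.trans_le hns
  calc Ring.multichoose s n ≤ (2 * s) ^ n / n.factorial := by
        rw [Real.multichoose_eq_eval_div]
        gcongr
        exact (ascPochhammer_eval_le_pow hs.le n).trans (by gcongr; linarith)
    _ = (2 * exp 1 * (s / n)) ^ n * ((n : ℝ) ^ n / n.factorial / exp n) := by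
        rw [show exp (n : ℝ) = exp 1 ^ n by rw [← exp_nat_mul, mul_one]]
        simp only [mul_pow, div_pow]
        field_simp
    _ ≤ (2 * exp 1 * exp (s / n - 1)) ^ n * 1 := by
        gcongr
        · linarith [add_one_le_exp (s / n - 1)]
        · rw [div_le_one (exp_pos _)]
          exact Real.pow_div_factorial_le_exp (x := n) hn'.le n
    _ = 2 ^ n * exp s := by
        rw [mul_one, mul_assoc, ← exp_add, mul_pow, ← exp_nat_mul]
        congr 2
        field_simp
        ring

theorem rpow_mul_multichoose_le_of_ge {s : ℝ} {n : ℕ} (hn : 0 < n) (hns : n ≤ s) :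
    (n : ℝ) ^ (1 - s) * Ring.multichoose s n ≤ (4 * exp 1 / n) ^ s := by
  have hn' : (0 : ℝ) < n := Nat.cast_pos.mpr hn
  have hmc := Real.multichoose_le_two_pow_mul_exp hn hns
  calc (n : ℝ) ^ (1 - s) * Ring.multichoose s n
      ≤ (n : ℝ) ^ (1 - s) * (2 ^ n * exp s) := by gcongr
    _ = ((n : ℝ) * 2 ^ n) * (exp s / (n : ℝ) ^ s) := by
        rw [rpow_sub hn', rpow_one]
        ring
    _ ≤ (4 : ℝ) ^ s * (exp s / (n : ℝ) ^ s) := by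
        gcongr
        calc (n : ℝ) * 2 ^ n ≤ 2 ^ n * 2 ^ n := by
              gcongr; exact_mod_cast (Nat.lt_two_pow_self).le
          _ = (4 : ℝ) ^ (n : ℝ) := by rw [rpow_natCast, ← mul_pow]; norm_num
          _ ≤ (4 : ℝ) ^ s := rpow_le_rpow_of_exponent_le (by norm_num) hns
    _ = (4 * exp 1 / n) ^ s := by
        rw [div_rpow (by positivity) hn'.le, mul_rpow (by norm_num) (exp_pos 1).le, exp_one_rpow]
        ring

theorem rpow_mul_multichoose_le {s : ℝ} {N n : ℕ} (hs : 0 < s) (hN : 0 < N) (hNn : N ≤ n) :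
    (n : ℝ) ^ (1 - s) * Ring.multichoose s n ≤ 2 ^ s / Gamma s + (4 * exp 1 / N) ^ s := by
  have hΓ : 0 ≤ 2 ^ s / Gamma s := by have := Gamma_pos_of_pos hs; positivity
  rcases le_total s n with hsn | hns
  · exact (rpow_mul_multichoose_le_of_le hs hsn).trans (le_add_of_nonneg_right (by positivity))
  · refine (rpow_mul_multichoose_le_of_ge (hN.trans_le hNn) hns).trans ?_
    refine le_add_of_nonneg_of_le hΓ (rpow_le_rpow (by positivity) ?_ hs.le)
    gcongr

theorem tendsto_tsum_rpow_mul_multichoose {α : ℝ} (hα0 : 0 < α) (hα1 : α ≤ 1) (y : ℝ) :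
    Tendsto (fun n : ℕ => ∑' m : ℕ,
        y ^ m * ((n : ℝ) ^ (1 - α * (m + 1)) * Ring.multichoose (α * (m + 1)) n))
      atTop (𝓝 (mittagLeffler α α y)) := by
  obtain ⟨N, hN, hNy⟩ : ∃ N : ℕ, 0 < N ∧ |y| * (4 * exp 1 / N) ^ α < 1 := by
    have : Tendsto (fun N : ℕ => |y| * (4 * exp 1 / N) ^ α) atTop (𝓝 0) := by
      simpa [zero_rpow hα0.ne'] using
        ((tendsto_const_div_atTop_nhds_zero_nat _).rpow_const (Or.inr hα0.le)).const_mul |y|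
    exact ((eventually_gt_atTop 0).and (this.eventually (gt_mem_nhds one_pos))).exists
  have hpow {b : ℝ} (hb : 0 < b) (m : ℕ) : b ^ (α * (m + 1)) = b ^ α * (b ^ α) ^ m := by
    rw [mul_add, mul_one, rpow_add hb, rpow_mul hb.le, rpow_natCast, mul_comm]
  have hdom : Summable fun m : ℕ =>
      |y| ^ m * (2 ^ (α * (m + 1)) / Gamma (α * (m + 1)) + (4 * exp 1 / N) ^ (α * (m + 1))) := by
    refine (((summable_pow_div_Gamma hα0 hα1 (|y| * 2 ^ α)).mul_left (2 ^ α)).add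
      ((summable_geometric_of_lt_one (by positivity) hNy).mul_left
        ((4 * exp 1 / N) ^ α))).congr fun m => ?_
    rw [hpow two_pos, hpow (by positivity)]
    ring
  have hML : mittagLeffler α α y = ∑' m : ℕ, y ^ m * (Gamma (α * (m + 1)))⁻¹ :=
    tsum_congr fun m => by rw [div_eq_mul_inv]; ring_nf
  rw [hML]
  refine tendsto_tsum_of_dominated_convergence hdom
    (fun m => (tendsto_rpow_mul_multichoose (by positivity)).const_mul _) ?_
  filter_upwards [eventually_ge_atTop N] with n hn m
  rw [norm_mul, norm_pow, Real.norm_eq_abs, Real.norm_of_nonneg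
    (mul_nonneg (by positivity) (Real.multichoose_nonneg (by positivity) n))]
  gcongr
  exact rpow_mul_multichoose_le (by positivity) hN hn

theorem rpow_mul_relaxationCoeff (α x : ℝ) {n : ℕ} (hn : 0 < n) :
    (n : ℝ) ^ (1 - α) * relaxationCoeff α (x * (n : ℝ) ^ (-α)) n =
      ∑' m : ℕ, (-x) ^ m * ((n : ℝ) ^ (1 - α * (m + 1)) * Ring.multichoose (α * (m + 1)) n) := by
  have hn' : (0 : ℝ) < n := Nat.cast_pos.mpr hn
  rw [relaxationCoeff, ← tsum_mul_left]
  refine tsum_congr fun m => ?_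
  rw [show 1 - α * (m + 1) = (1 - α) + -α * m by ring, rpow_add hn', rpow_mul hn'.le,
    rpow_natCast]
  ring

theorem mittagLeffler_alpha_alpha_nonneg (α x : ℝ) (hα0 : 0 < α) (hα1 : α ≤ 1)
    (hx : 0 ≤ x) : 0 ≤ mittagLeffler α α (-x) := by
  have hc : Tendsto (fun n : ℕ => x * (n : ℝ) ^ (-α)) atTop (𝓝 0) := by
    simpa using ((tendsto_rpow_neg_atTop hα0).comp tendsto_natCast_atTop_atTop).const_mul x
  refine ge_of_tendsto (tendsto_tsum_rpow_mul_multichoose hα0 hα1 (-x)) ?_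
  filter_upwards [eventually_gt_atTop 0, hc.eventually (gt_mem_nhds one_pos)] with n hn hc1
  have hc0 : 0 ≤ x * (n : ℝ) ^ (-α) := by positivity
  rw [← rpow_mul_relaxationCoeff α x hn]
  exact mul_nonneg (by positivity)
    (relaxationCoeff_nonneg hα0.le hα1 (by rwa [abs_of_nonneg hc0]) n)
end

section
/- For 0 < α ≤ 1 and every λ > 0, the function x ↦ x^{α-1} E_{α,α}(-λ x^α) is monotonically decreasing on (0, ∞): for all 0 < x ≤ y one has y^{α-1} E_{α,α}(-λ y^α) ≤ x^{α-1} E_{α,α}(-λ x^α). -/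
open Real

/-!
The function `x ↦ x^(α-1) E_{α,α}(-λ x^α)` is the inverse Laplace transform of
`F(s) = (s^α + λ)⁻¹`, so by the Post–Widder formula it is the limit of
`fₙ(x) = (n/x)^(n+1) (-1)ⁿ F⁽ⁿ⁾(n/x) / n!`. With `u = v^α` one has
`(-1)ⁿ vⁿ F⁽ⁿ⁾(v) = ∑ⱼ aₙⱼ uʲ / (u + λ)^(j+1)` where the coefficients `aₙⱼ` are nonnegative
for `0 < α ≤ 1`, and `v uʲ / (u + λ)^(j+1) = v^(1-α) (u / (u + λ))^(j+1)` increases with `v`.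
Hence every `fₙ` is decreasing, and so is the limit.

The Post–Widder limit is checked directly: expanding `F` in powers of `v^(-α)` for large `v`
and differentiating termwise gives `fₙ(x) = ∑ₖ (-λ)ᵏ x^(βₖ-1) (βₖ)ₙ n^(1-βₖ) / n!` with
`βₖ = (k+1)α`. By Euler's limit formula `(β)ₙ n^(1-β) / n! → Γ(β)⁻¹`, and this sequence
decreases in `n` once `β ≥ 1`, which dominates all but finitely many terms.
-/

open Filter Finset Topology

theorem tendsto_tsum_of_tail_dominated_convergence {ι G : Type*} {𝓕 : Filter ι}
    [NormedAddCommGroup G] [CompleteSpace G] {f : ι → ℕ → G} {g : ℕ → G} {bound : ℕ → ℝ}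
    (k₀ : ℕ) (h_sum : Summable bound) (hab : ∀ k, Tendsto (f · k) 𝓕 (𝓝 (g k)))
    (h_bound : ∀ᶠ n in 𝓕, ∀ k, k₀ ≤ k → ‖f n k‖ ≤ bound k) :
    Tendsto (∑' k, f · k) 𝓕 (𝓝 (∑' k, g k)) := by
  rcases 𝓕.eq_or_neBot with rfl | _
  · exact tendsto_bot
  have h_tail : Summable fun k ↦ bound (k + k₀) := (summable_nat_add_iff k₀).2 h_sum
  have h_bound' : ∀ᶠ n in 𝓕, ∀ k, ‖f n (k + k₀)‖ ≤ bound (k + k₀) :=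
    h_bound.mono fun n h k ↦ h _ (Nat.le_add_left k₀ k)
  have hg : Summable g := (summable_nat_add_iff k₀).1 <| h_tail.of_norm_bounded fun k ↦
    le_of_tendsto (hab _).norm (h_bound'.mono fun n h ↦ h k)
  rw [← hg.sum_add_tsum_nat_add k₀]
  refine ((tendsto_finsetSum _ fun k _ ↦ hab k).add
    (tendsto_tsum_of_dominated_convergence h_tail (fun k ↦ hab (k + k₀)) h_bound')).congr' ?_
  filter_upwards [h_bound'] with n hn
  exact ((summable_nat_add_iff k₀).1 (h_tail.of_norm_bounded hn)).sum_add_tsum_nat_add k₀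

theorem add_mul_rpow_one_sub_le {b t : ℝ} (hb : 1 ≤ b) (ht : 0 < t) :
    (t + b) * (t + 1) ^ (1 - b) ≤ (t + 1) * t ^ (1 - b) := by
  have bernoulli : 1 + b * t⁻¹ ≤ (1 + t⁻¹) ^ b :=
    one_add_mul_self_le_rpow_one_add (by linarith [inv_pos.2 ht]) hb
  have key : (t + b) * t ^ b ≤ t * (t + 1) ^ b :=
    calc (t + b) * t ^ b = t * (t ^ b * (1 + b * t⁻¹)) := by field_simp
      _ ≤ t * (t ^ b * (1 + t⁻¹) ^ b) := by gcongr
      _ = t * (t + 1) ^ b := by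
        rw [← mul_rpow ht.le (by positivity), mul_add, mul_one, mul_inv_cancel₀ ht.ne']
  rw [rpow_sub (by linarith), rpow_sub ht, rpow_one, rpow_one, mul_div, mul_div,
    div_le_div_iff₀ (by positivity) (by positivity)]
  nlinarith

namespace MittagLeffler

noncomputable def pochhammerRatio (b : ℝ) (n : ℕ) : ℝ :=
  (∏ i ∈ range n, (b + i)) * (n : ℝ) ^ (1 - b) / n.factorial

theorem pochhammerRatio_nonneg {b : ℝ} (hb : 0 ≤ b) (n : ℕ) : 0 ≤ pochhammerRatio b n := by
  unfold pochhammerRatio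
  have : 0 ≤ ∏ i ∈ range n, (b + i) := prod_nonneg fun i _ ↦ by positivity
  positivity

theorem pochhammerRatio_succ_le {b : ℝ} (hb : 1 ≤ b) {n : ℕ} (hn : n ≠ 0) :
    pochhammerRatio b (n + 1) ≤ pochhammerRatio b n := by
  have hP : 0 ≤ ∏ i ∈ range n, (b + i) := prod_nonneg fun i _ ↦ by positivity
  have step := add_mul_rpow_one_sub_le hb (Nat.cast_pos.2 (Nat.pos_of_ne_zero hn))
  unfold pochhammerRatio
  rw [prod_range_succ, Nat.factorial_succ]
  push_cast
  calc (∏ i ∈ range n, (b + i)) * (b + n) * (n + 1 : ℝ) ^ (1 - b) / ((n + 1) * n.factorial)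
      = (∏ i ∈ range n, (b + i)) / ((n + 1) * n.factorial) * ((n + b) * (n + 1) ^ (1 - b)) := by
        ring
    _ ≤ (∏ i ∈ range n, (b + i)) / ((n + 1) * n.factorial) * ((n + 1) * n ^ (1 - b)) := by
        gcongr
    _ = (∏ i ∈ range n, (b + i)) * n ^ (1 - b) / n.factorial := by
        field_simp

theorem pochhammerRatio_antitoneOn {b : ℝ} (hb : 1 ≤ b) :
    AntitoneOn (pochhammerRatio b) (Set.Ici 1) :=
  antitoneOn_nat_Ici_of_succ_le fun _ hn ↦ pochhammerRatio_succ_le hb (by omega)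

theorem pochhammerRatio_eq {b : ℝ} (hb : 0 < b) {n : ℕ} (hn : n ≠ 0) :
    pochhammerRatio b n = n / (n + b) * (GammaSeq b n)⁻¹ := by
  have hn' : (0 : ℝ) < n := Nat.cast_pos.2 (Nat.pos_of_ne_zero hn)
  have hP : 0 < ∏ i ∈ range n, (b + i) := prod_pos fun i _ ↦ by positivity
  rw [pochhammerRatio, GammaSeq, prod_range_succ, rpow_sub hn', rpow_one]
  field_simp
  ring

theorem tendsto_pochhammerRatio {b : ℝ} (hb : 0 < b) :
    Tendsto (pochhammerRatio b) atTop (𝓝 (Gamma b)⁻¹) := by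
  have h := (tendsto_natCast_div_add_atTop b).mul
    ((GammaSeq_tendsto_Gamma b).inv₀ (Gamma_pos_of_pos hb).ne')
  rw [one_mul] at h
  exact h.congr' ((eventually_ne_atTop 0).mono fun n hn ↦ (pochhammerRatio_eq hb hn).symm)

variable {α lam : ℝ}

/-- `(-1)ⁿ vⁿ (d/dv)ⁿ (v^α + λ)⁻¹ = ∑ⱼ derivCoeff α n j · (v^α)ʲ / (v^α + λ)^(j+1)`. -/
noncomputable def derivCoeff (α : ℝ) : ℕ → ℕ → ℝ
  | 0, j => if j = 0 then 1 else 0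
  | n + 1, j => (n - j * α) * derivCoeff α n j + j * α * derivCoeff α n (j - 1)

theorem derivCoeff_eq_zero_of_lt (α : ℝ) {n j : ℕ} (h : n < j) : derivCoeff α n j = 0 := by
  induction n generalizing j with
  | zero => simp [derivCoeff, h.ne']
  | succ n ih => simp [derivCoeff, ih (by omega : n < j), ih (by omega : n < j - 1)]

theorem derivCoeff_nonneg (hα0 : 0 ≤ α) (hα1 : α ≤ 1) (n j : ℕ) : 0 ≤ derivCoeff α n j := by
  induction n generalizing j with
  | zero => unfold derivCoeff; split_ifs <;> norm_num
  | succ n ih =>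
    have hj : 0 ≤ j * α * derivCoeff α n (j - 1) := mul_nonneg (by positivity) (ih _)
    rcases le_or_gt j n with hjn | hjn
    · have : (j : ℝ) * α ≤ n := by
        calc (j : ℝ) * α ≤ j := mul_le_of_le_one_right j.cast_nonneg hα1
          _ ≤ n := by exact_mod_cast hjn
      exact add_nonneg (mul_nonneg (by linarith) (ih j)) hj
    · simpa [derivCoeff, derivCoeff_eq_zero_of_lt α hjn] using hj

noncomputable def powFrac (α lam : ℝ) (j : ℕ) (v : ℝ) : ℝ :=
  (v ^ α) ^ j / (v ^ α + lam) ^ (j + 1)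

noncomputable def derivSum (α lam : ℝ) (n : ℕ) (v : ℝ) : ℝ :=
  ∑ j ∈ range (n + 1), derivCoeff α n j * powFrac α lam j v

theorem derivSum_zero (v : ℝ) : derivSum α lam 0 v = (v ^ α + lam)⁻¹ := by
  simp [derivSum, derivCoeff, powFrac]

theorem hasDerivAt_powFrac (hlam : 0 ≤ lam) (j : ℕ) {v : ℝ} (hv : 0 < v) :
    HasDerivAt (powFrac α lam j)
      (α / v * (j * powFrac α lam j v - (j + 1) * powFrac α lam (j + 1) v)) v := by
  have hu : 0 < v ^ α := rpow_pos_of_pos hv α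
  have hpow : HasDerivAt (fun v : ℝ ↦ v ^ α) (α * v ^ α / v) v := by
    simpa [rpow_sub_one hv.ne', mul_div_assoc] using hasDerivAt_rpow_const (p := α) (Or.inl hv.ne')
  refine ((hpow.fun_pow j).div ((hpow.add_const lam).fun_pow (j + 1))
    (pow_pos (by positivity : 0 < v ^ α + lam) _).ne').congr_deriv ?_
  unfold powFrac
  cases j with
  | zero => field_simp; ring
  | succ m => push_cast; field_simp; ring

theorem derivSum_succ (n : ℕ) (v : ℝ) :
    derivSum α lam (n + 1) v = n * derivSum α lam n v - α * ∑ j ∈ range (n + 1),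
      derivCoeff α n j * (j * powFrac α lam j v - (j + 1) * powFrac α lam (j + 1) v) := by
  have top : ∑ j ∈ range (n + 2), (n - j * α) * derivCoeff α n j * powFrac α lam j v
      = ∑ j ∈ range (n + 1), (n - j * α) * derivCoeff α n j * powFrac α lam j v := by
    simp [sum_range_succ _ (n + 1), derivCoeff_eq_zero_of_lt α (Nat.lt_succ_self n)]
  have shift : ∑ j ∈ range (n + 2), j * α * derivCoeff α n (j - 1) * powFrac α lam j v
      = ∑ j ∈ range (n + 1), (j + 1) * α * derivCoeff α n j * powFrac α lam (j + 1) v := by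
    simp [sum_range_succ' _ (n + 1)]
  have split : derivSum α lam (n + 1) v
      = ∑ j ∈ range (n + 2), (n - j * α) * derivCoeff α n j * powFrac α lam j v
        + ∑ j ∈ range (n + 2), j * α * derivCoeff α n (j - 1) * powFrac α lam j v := by
    rw [← sum_add_distrib]
    exact sum_congr rfl fun j _ ↦ by rw [derivCoeff]; ring
  rw [split, top, shift, derivSum, mul_sum, mul_sum, ← sum_add_distrib, ← sum_sub_distrib]
  exact sum_congr rfl fun j _ ↦ by ring

theorem hasDerivAt_derivSum (hlam : 0 ≤ lam) (n : ℕ) {v : ℝ} (hv : 0 < v) :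
    HasDerivAt (derivSum α lam n) ((n * derivSum α lam n v - derivSum α lam (n + 1) v) / v) v := by
  refine (HasDerivAt.fun_sum fun j _ ↦ (hasDerivAt_powFrac hlam j hv).const_mul
    (derivCoeff α n j)).congr_deriv ?_
  rw [derivSum_succ, sub_sub_cancel, mul_sum, sum_div]
  exact sum_congr rfl fun j _ ↦ by ring

theorem hasDerivAt_derivSum_div_pow (hlam : 0 ≤ lam) (n : ℕ) {v : ℝ} (hv : 0 < v) :
    HasDerivAt (fun z ↦ derivSum α lam n z / z ^ n)
      (-(derivSum α lam (n + 1) v / v ^ (n + 1))) v := by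
  refine ((hasDerivAt_derivSum hlam n hv).div (hasDerivAt_pow n v)
    (pow_ne_zero n hv.ne')).congr_deriv ?_
  cases n with
  | zero => simp [neg_div]
  | succ m => rw [Nat.add_sub_cancel]; field_simp; ring

theorem mul_powFrac_eq (j : ℕ) {v : ℝ} (hv : 0 < v) :
    v * powFrac α lam j v = v ^ (1 - α) * (v ^ α / (v ^ α + lam)) ^ (j + 1) := by
  have hu : 0 < v ^ α := rpow_pos_of_pos hv α
  rw [powFrac, rpow_sub hv, rpow_one, div_pow, pow_succ (v ^ α)]
  field_simp

theorem monotoneOn_mul_powFrac (hα0 : 0 ≤ α) (hα1 : α ≤ 1) (hlam : 0 ≤ lam) (j : ℕ) :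
    MonotoneOn (fun v ↦ v * powFrac α lam j v) (Set.Ioi 0) := by
  intro v (hv : 0 < v) w (hw : 0 < w) hvw
  have hvα : 0 < v ^ α := rpow_pos_of_pos hv α
  have hvwα : v ^ α ≤ w ^ α := rpow_le_rpow hv.le hvw hα0
  have hfrac : v ^ α / (v ^ α + lam) ≤ w ^ α / (w ^ α + lam) := by
    rw [div_le_div_iff₀ (by positivity) (by linarith)]
    nlinarith
  simp only [mul_powFrac_eq j hv, mul_powFrac_eq j hw]
  gcongr

theorem monotoneOn_mul_derivSum (hα0 : 0 ≤ α) (hα1 : α ≤ 1) (hlam : 0 ≤ lam) (n : ℕ) :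
    MonotoneOn (fun v ↦ v * derivSum α lam n v) (Set.Ioi 0) := by
  intro v hv w hw hvw
  simp only [derivSum, mul_sum, mul_left_comm _ (derivCoeff α n _)]
  exact sum_le_sum fun j _ ↦ mul_le_mul_of_nonneg_left
    (monotoneOn_mul_powFrac hα0 hα1 hlam j hv hw hvw) (derivCoeff_nonneg hα0 hα1 n j)

noncomputable def expo (α : ℝ) (k : ℕ) : ℝ := (k + 1) * α

theorem expo_nonneg (hα0 : 0 ≤ α) (k : ℕ) : 0 ≤ expo α k := by
  unfold expo; positivity

theorem expo_le (hα1 : α ≤ 1) (k : ℕ) : expo α k ≤ k + 1 :=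
  mul_le_of_le_one_right (by positivity) hα1

theorem rpow_neg_expo {v : ℝ} (hv : 0 ≤ v) (k : ℕ) :
    v ^ (-expo α k) = ((v ^ α) ^ (k + 1))⁻¹ := by
  rw [← rpow_mul_natCast hv, rpow_neg hv, expo]
  push_cast
  ring_nf

/-- Termwise `n`-th derivative, up to the sign `(-1)ⁿ`, of `(v^α + λ)⁻¹ = ∑ₖ (-λ)ᵏ v^(-(k+1)α)`. -/
noncomputable def seriesTerm (α lam : ℝ) (n k : ℕ) (v : ℝ) : ℝ :=
  (-lam) ^ k * (∏ i ∈ range n, (expo α k + i)) * v ^ (-expo α k - n)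

noncomputable def derivSeries (α lam : ℝ) (n : ℕ) (v : ℝ) : ℝ :=
  ∑' k, seriesTerm α lam n k v

theorem prod_expo_add_nonneg (hα0 : 0 ≤ α) (n k : ℕ) : 0 ≤ ∏ i ∈ range n, (expo α k + i) :=
  prod_nonneg fun i _ ↦ add_nonneg (expo_nonneg hα0 k) i.cast_nonneg

theorem prod_expo_add_le_descFactorial (hα0 : 0 ≤ α) (hα1 : α ≤ 1) (n k : ℕ) :
    ∏ i ∈ range n, (expo α k + i) ≤ (k + n).descFactorial n := by
  rw [Nat.add_descFactorial_eq_ascFactorial, Nat.ascFactorial_eq_prod_range]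
  push_cast
  gcongr with i
  · exact fun i _ ↦ add_nonneg (expo_nonneg hα0 k) i.cast_nonneg
  · exact expo_le hα1 k

theorem summable_prod_expo_add_mul_geometric (hα0 : 0 ≤ α) (hα1 : α ≤ 1) (n : ℕ) {r : ℝ}
    (hr0 : 0 ≤ r) (hr1 : r < 1) :
    Summable fun k ↦ (∏ i ∈ range n, (expo α k + i)) * r ^ k :=
  (summable_descFactorial_mul_geometric_of_norm_lt_one n
    (by rwa [norm_of_nonneg hr0])).of_nonneg_of_le
    (fun k ↦ mul_nonneg (prod_expo_add_nonneg hα0 n k) (pow_nonneg hr0 k))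
    (fun k ↦ mul_le_mul_of_nonneg_right (prod_expo_add_le_descFactorial hα0 hα1 n k)
      (pow_nonneg hr0 k))

theorem norm_seriesTerm (hα0 : 0 ≤ α) (hlam : 0 ≤ lam) (n k : ℕ) {v : ℝ} (hv : 0 ≤ v) :
    ‖seriesTerm α lam n k v‖
      = lam ^ k * (∏ i ∈ range n, (expo α k + i)) * v ^ (-expo α k - n) := by
  rw [seriesTerm, norm_mul, norm_mul, norm_pow, norm_neg, norm_of_nonneg hlam,
    norm_of_nonneg (prod_expo_add_nonneg hα0 n k), norm_of_nonneg (rpow_nonneg hv _)]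

theorem norm_seriesTerm_le_of_le (hα0 : 0 ≤ α) (hlam : 0 ≤ lam) (n k : ℕ) {c v : ℝ}
    (hc : 0 < c) (hcv : c ≤ v) :
    ‖seriesTerm α lam n k v‖ ≤ ‖seriesTerm α lam n k c‖ := by
  rw [norm_seriesTerm hα0 hlam n k hc.le, norm_seriesTerm hα0 hlam n k (hc.le.trans hcv)]
  have := prod_expo_add_nonneg hα0 n k
  exact mul_le_mul_of_nonneg_left
    (rpow_le_rpow_of_nonpos hc hcv (by linarith [expo_nonneg hα0 k])) (by positivity)

theorem summable_norm_seriesTerm (hα0 : 0 ≤ α) (hα1 : α ≤ 1) (hlam : 0 ≤ lam) {c v : ℝ}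
    (hc : 0 < c) (hclam : lam < c ^ α) (hcv : c ≤ v) (n : ℕ) :
    Summable fun k ↦ ‖seriesTerm α lam n k v‖ := by
  have hcα : 0 < c ^ α := rpow_pos_of_pos hc α
  have hr : lam / c ^ α < 1 := by rwa [div_lt_one hcα]
  refine .of_nonneg_of_le (fun _ ↦ norm_nonneg _)
    (fun k ↦ norm_seriesTerm_le_of_le hα0 hlam n k hc hcv)
    (((summable_prod_expo_add_mul_geometric hα0 hα1 n (by positivity) hr).mul_left
      ((c ^ α)⁻¹ / c ^ n)).congr fun k ↦ ?_)
  rw [norm_seriesTerm hα0 hlam n k hc.le, rpow_sub_natCast hc.ne', rpow_neg_expo hc.le]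
  ring

theorem hasDerivAt_seriesTerm (n k : ℕ) {v : ℝ} (hv : 0 < v) :
    HasDerivAt (seriesTerm α lam n k) (-seriesTerm α lam (n + 1) k v) v := by
  refine ((hasDerivAt_rpow_const (p := -expo α k - n) (Or.inl hv.ne')).const_mul
    ((-lam) ^ k * ∏ i ∈ range n, (expo α k + i))).congr_deriv ?_
  rw [seriesTerm, prod_range_succ]
  push_cast
  ring_nf

theorem derivSeries_zero (hlam : 0 ≤ lam) {v : ℝ} (hv : 0 < v) (hvlam : lam < v ^ α) :
    derivSeries α lam 0 v = (v ^ α + lam)⁻¹ := by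
  have hvα : 0 < v ^ α := rpow_pos_of_pos hv α
  have hr : ‖-lam / v ^ α‖ < 1 := by
    rwa [norm_div, norm_neg, norm_of_nonneg hlam, norm_of_nonneg hvα.le, div_lt_one hvα]
  have hterm (k : ℕ) : seriesTerm α lam 0 k v = (v ^ α)⁻¹ * (-lam / v ^ α) ^ k := by
    rw [seriesTerm, prod_range_zero, Nat.cast_zero, sub_zero, rpow_neg_expo hv.le]
    ring
  rw [derivSeries, funext hterm, tsum_mul_left, tsum_geometric_of_norm_lt_one hr, ← mul_inv]
  congr 1
  field_simp
  ring

theorem hasDerivAt_derivSeries (hα0 : 0 ≤ α) (hα1 : α ≤ 1) (hlam : 0 ≤ lam) {c v : ℝ}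
    (hc : 0 < c) (hclam : lam < c ^ α) (n : ℕ) (hcv : c < v) :
    HasDerivAt (derivSeries α lam n) (-derivSeries α lam (n + 1) v) v := by
  have h := hasDerivAt_tsum_of_isPreconnected
    (summable_norm_seriesTerm hα0 hα1 hlam hc hclam le_rfl (n + 1)) isOpen_Ioi
    (convex_Ioi c).isPreconnected (fun k y hy ↦ hasDerivAt_seriesTerm n k (hc.trans hy))
    (fun k y hy ↦ (norm_neg _).trans_le (norm_seriesTerm_le_of_le hα0 hlam _ k hc (le_of_lt hy)))
    hcv (summable_norm_seriesTerm hα0 hα1 hlam hc hclam hcv.le n).of_norm hcv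
  rwa [tsum_neg] at h

theorem derivSum_div_pow_eq_derivSeries (hα0 : 0 ≤ α) (hα1 : α ≤ 1) (hlam : 0 ≤ lam) {c : ℝ}
    (hc : 0 < c) (hclam : lam < c ^ α) (n : ℕ) {v : ℝ} (hcv : c < v) :
    derivSum α lam n v / v ^ n = derivSeries α lam n v := by
  induction n generalizing v with
  | zero =>
    rw [pow_zero, div_one, derivSum_zero, derivSeries_zero hlam (hc.trans hcv)
      (hclam.trans_le (rpow_le_rpow hc.le hcv.le hα0))]
  | succ n ih =>
    have hseries := (hasDerivAt_derivSeries hα0 hα1 hlam hc hclam n hcv).congr_of_eventuallyEq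
      (eventually_of_mem (Ioi_mem_nhds hcv) fun z hz ↦ ih hz)
    exact neg_inj.1 ((hasDerivAt_derivSum_div_pow hlam n (hc.trans hcv)).unique hseries)

theorem expo_pos (hα0 : 0 < α) (k : ℕ) : 0 < expo α k := by
  unfold expo; positivity

theorem one_le_expo (hα0 : 0 < α) {k : ℕ} (hk : ⌈α⁻¹⌉₊ ≤ k) : 1 ≤ expo α k := by
  have hk' : α⁻¹ ≤ k := Nat.ceil_le.1 hk
  have : α⁻¹ * α = 1 := inv_mul_cancel₀ hα0.ne'
  unfold expo
  nlinarith

/-- Post–Widder approximation `(n/x)^(n+1) (-1)ⁿ F⁽ⁿ⁾(n/x) / n!` of the inverse Laplace transform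
of `F(s) = (s^α + λ)⁻¹`. -/
noncomputable def postWidder (α lam : ℝ) (n : ℕ) (x : ℝ) : ℝ :=
  n / x * derivSum α lam n (n / x) / n.factorial

theorem postWidder_antitoneOn (hα0 : 0 ≤ α) (hα1 : α ≤ 1) (hlam : 0 ≤ lam) {n : ℕ}
    (hn : n ≠ 0) : AntitoneOn (postWidder α lam n) (Set.Ioi 0) := by
  intro x (hx : 0 < x) y (hy : 0 < y) hxy
  have hn' : (0 : ℝ) < n := by positivity
  exact div_le_div_of_nonneg_right (monotoneOn_mul_derivSum hα0 hα1 hlam n (div_pos hn' hy)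
    (div_pos hn' hx) (div_le_div_of_nonneg_left hn'.le hx hxy)) (by positivity)

noncomputable def postWidderTerm (α lam x : ℝ) (n k : ℕ) : ℝ :=
  (-lam) ^ k * x ^ (expo α k - 1) * pochhammerRatio (expo α k) n

theorem postWidderTerm_eq {x : ℝ} (hx : 0 < x) {n : ℕ} (hn : n ≠ 0) (k : ℕ) :
    postWidderTerm α lam x n k
      = (n / x) ^ (n + 1) / n.factorial * seriesTerm α lam n k (n / x) := by
  have hn' : (0 : ℝ) < n := by positivity
  have hpow : (n / x : ℝ) ^ (n + 1) * (n / x) ^ (-expo α k - n)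
      = n ^ (1 - expo α k) * x ^ (expo α k - 1) := by
    have hexp : ((n + 1 : ℕ) : ℝ) + (-expo α k - n) = 1 - expo α k := by push_cast; ring
    rw [← rpow_natCast, ← rpow_add (by positivity), hexp, div_rpow hn'.le hx.le, div_eq_mul_inv,
      ← rpow_neg hx.le, neg_sub]
  rw [postWidderTerm, pochhammerRatio, seriesTerm]
  linear_combination (-lam) ^ k * (∏ i ∈ range n, (expo α k + i)) / n.factorial * hpow.symm

theorem postWidder_eq_tsum (hα0 : 0 ≤ α) (hα1 : α ≤ 1) (hlam : 0 ≤ lam) {c : ℝ} (hc : 0 < c)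
    (hclam : lam < c ^ α) {x : ℝ} (hx : 0 < x) {n : ℕ} (hcn : c < n / x) :
    postWidder α lam n x = ∑' k, postWidderTerm α lam x n k := by
  have hn : n ≠ 0 := by rintro rfl; simp at hcn; linarith
  have hS : derivSum α lam n (n / x) = (n / x) ^ n * derivSeries α lam n (n / x) := by
    rw [← derivSum_div_pow_eq_derivSeries hα0 hα1 hlam hc hclam n hcn]
    field_simp
  simp_rw [postWidderTerm_eq hx hn]
  rw [tsum_mul_left, postWidder, hS, derivSeries, pow_succ]
  ring

theorem mul_mittagLeffler_eq_tsum {x : ℝ} (hx : 0 < x) :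
    x ^ (α - 1) * mittagLeffler α α (-lam * x ^ α)
      = ∑' k, (-lam) ^ k * x ^ (expo α k - 1) * (Gamma (expo α k))⁻¹ := by
  rw [mittagLeffler, ← tsum_mul_left]
  refine tsum_congr fun k ↦ ?_
  have hpow : x ^ (α - 1) * (x ^ α) ^ k = x ^ (expo α k - 1) := by
    rw [← rpow_mul_natCast hx.le, ← rpow_add hx, expo]
    ring_nf
  rw [mul_pow, ← hpow, show (k : ℝ) * α + α = expo α k by rw [expo]; ring]
  ring

theorem tendsto_postWidder (hα0 : 0 < α) (hα1 : α ≤ 1) (hlam : 0 ≤ lam) {x : ℝ} (hx : 0 < x) :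
    Tendsto (fun n ↦ postWidder α lam n x) atTop
      (𝓝 (x ^ (α - 1) * mittagLeffler α α (-lam * x ^ α))) := by
  obtain ⟨c, hc, hclam⟩ : ∃ c : ℝ, 0 < c ∧ lam < c ^ α :=
    ⟨(lam + 1) ^ α⁻¹, by positivity, by
      rw [← rpow_mul (by positivity), inv_mul_cancel₀ hα0.ne', rpow_one]; linarith⟩
  obtain ⟨n₀, hn₀⟩ := eventually_atTop.1
    ((tendsto_natCast_atTop_atTop.atTop_div_const hx).eventually_gt_atTop c)
  have hn₀1 : 1 ≤ n₀ := Nat.one_le_iff_ne_zero.2 fun h ↦ by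
    simpa [h] using hc.trans (hn₀ n₀ le_rfl)
  rw [mul_mittagLeffler_eq_tsum hx]
  refine (tendsto_tsum_of_tail_dominated_convergence ⌈α⁻¹⌉₊
    (bound := fun k ↦ ‖postWidderTerm α lam x n₀ k‖) ?_
    (fun k ↦ (tendsto_pochhammerRatio (expo_pos hα0 k)).const_mul _) ?_).congr' ?_
  · simp_rw [postWidderTerm_eq hx (Nat.one_le_iff_ne_zero.1 hn₀1), norm_mul]
    exact (summable_norm_seriesTerm hα0.le hα1 hlam hc hclam (hn₀ n₀ le_rfl).le n₀).mul_left _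
  · filter_upwards [eventually_ge_atTop n₀] with n hn k hk
    have hb := expo_nonneg hα0.le k
    simp only [postWidderTerm, norm_mul, norm_of_nonneg (pochhammerRatio_nonneg hb _)]
    exact mul_le_mul_of_nonneg_left (pochhammerRatio_antitoneOn (one_le_expo hα0 hk)
      (Set.mem_Ici.2 hn₀1) (Set.mem_Ici.2 (hn₀1.trans hn)) hn) (by positivity)
  · filter_upwards [eventually_ge_atTop n₀] with n hn
    exact (postWidder_eq_tsum hα0.le hα1 hlam hc hclam hx (hn₀ n hn)).symm

end MittagLeffler

theorem rpow_mul_mittagLeffler_antitone (α lam : ℝ) (hα0 : 0 < α) (hα1 : α ≤ 1)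
    (hlam : 0 < lam) :
    ∀ x y : ℝ, 0 < x → x ≤ y →
      y ^ (α - 1) * mittagLeffler α α (-lam * y ^ α)
        ≤ x ^ (α - 1) * mittagLeffler α α (-lam * x ^ α) := by
  intro x y hx hxy
  have hy : 0 < y := hx.trans_le hxy
  refine le_of_tendsto_of_tendsto (MittagLeffler.tendsto_postWidder hα0 hα1 hlam.le hy)
    (MittagLeffler.tendsto_postWidder hα0 hα1 hlam.le hx) ?_
  filter_upwards [eventually_ne_atTop 0] with n hn
  exact MittagLeffler.postWidder_antitoneOn hα0.le hα1 hlam.le hn hx hy hxy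
end

section
/- Let 0 < H < 1/2, 0 < α ≤ 1 with α + H > 1. There exists a constant C > 0 (depending only on α and H) such that for every λ > 0 and every t > 0, ∫_0^t (t/τ)^{2H-1} (t-τ)^{2α+2H-3} E_{α,α}(-λ (t-τ)^α)² dτ ≤ C t^{2α+2H-2}. -/
/-!
Both factors in front of `(t - τ) ^ (2α + 2H - 3)` lie in `[0, 1]`: `(t / τ) ^ (2H - 1) ≤ 1` because
`2H - 1 < 0`, and `0 ≤ E_{α,α}(-x) ≤ 1` for `x ≥ 0`. The integral is therefore at most
`∫₀ᵗ (t - τ) ^ (2α + 2H - 3) dτ = t ^ (2α + 2H - 2) / (2α + 2H - 2)`.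

The bound on `E_{α,α}` comes from a discretisation. Replacing `1 / Γ(s)` by Euler's approximation
`n ^ (1 - s) (s)ₙ / n!` turns the series for `E_{α,α}(-x)` into `n ^ (1 - α) Fₙ`, where `Fₙ` is the
`n`-th Taylor coefficient of `1 / (c + (1 - z) ^ α)` with `c = x / n ^ α`. These coefficients solve
the renewal equation `F + c (p ⋆ F) = p` for the coefficients `pₙ = (α)ₙ / n!` of `(1 - z) ^ (-α)`.
Because `α ≤ 1`, the ratios `pₙ₊₁ / pₙ = (α + n) / (n + 1)` are nondecreasing, and a Kaluza-type
argument gives `0 ≤ Fₙ ≤ pₙ`. Hence `0 ≤ n ^ (1 - α) Fₙ ≤ n ^ (1 - α) pₙ ≤ 1`. Finally let `n → ∞`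
(Tannery's theorem), dominating with the monotonicity of Euler's approximation in `n` for `s ≥ 1`.
-/

open Real intervalIntegral

open Filter Topology MeasureTheory Finset

theorem Ring.multichoose_add {R : Type*} [CommRing R] [BinomialRing R] (a b : R) (n : ℕ) :
    multichoose (a + b) n = ∑ ij ∈ antidiagonal n, multichoose a ij.1 * multichoose b ij.2 := by
  have h := add_choose_eq (r := -a) (s := -b) n (Commute.all _ _)
  rw [← neg_add, choose_neg'] at h
  simp only [choose_neg'] at h
  rw [sum_congr rfl fun ij hij => by
    rw [smul_mul_smul_comm, ← Int.negOnePow_add, ← Nat.cast_add, mem_antidiagonal.mp hij],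
    ← smul_sum] at h
  exact MulAction.injective _ h

namespace Real

theorem multichoose_eq_div (a : ℝ) (n : ℕ) :
    Ring.multichoose a n = (ascPochhammer ℝ n).eval a / n.factorial := by
  rw [eq_div_iff (by positivity), ← Polynomial.ascPochhammer_smeval_eq_eval,
    ← Ring.factorial_nsmul_multichoose_eq_ascPochhammer, nsmul_eq_mul, mul_comm]

theorem multichoose_succ (a : ℝ) (n : ℕ) :
    Ring.multichoose a (n + 1) = (a + n) / (n + 1) * Ring.multichoose a n := by
  rw [multichoose_eq_div, multichoose_eq_div, ascPochhammer_succ_eval, Nat.factorial_succ]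
  push_cast
  field_simp

theorem multichoose_eq_prod (a : ℝ) (n : ℕ) :
    Ring.multichoose a n = ∏ j ∈ range n, (a + j) / (j + 1) := by
  induction n with
  | zero => simp
  | succ n ih => rw [multichoose_succ, ih, prod_range_succ, mul_comm]

theorem multichoose_nonneg_s10 {a : ℝ} (ha : 0 ≤ a) (n : ℕ) : 0 ≤ Ring.multichoose a n := by
  rw [multichoose_eq_prod]
  exact prod_nonneg fun j _ => by positivity

theorem multichoose_le_one_add_pow {a : ℝ} (ha : 0 ≤ a) (n : ℕ) :
    Ring.multichoose a n ≤ (1 + a) ^ n := by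
  rw [multichoose_eq_prod]
  refine (prod_le_prod (g := fun _ => 1 + a) (fun j _ => by positivity) fun j _ => ?_).trans_eq
    (by simp)
  rw [div_le_iff₀ (by positivity)]
  nlinarith [(Nat.cast_nonneg j : (0:ℝ) ≤ j)]

theorem multichoose_le_rpow {a : ℝ} (ha0 : 0 ≤ a) (ha1 : a ≤ 1) {n : ℕ} (hn : 1 ≤ n) :
    Ring.multichoose a n ≤ (n : ℝ) ^ (a - 1) := by
  have hn0 : (0 : ℝ) < n := by exact_mod_cast hn
  have hexp : Ring.multichoose a n ≤ exp ((a - 1) * harmonic n) := by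
    rw [multichoose_eq_prod, harmonic, Rat.cast_sum, mul_sum, exp_sum]
    refine prod_le_prod (fun j _ => by positivity) fun j _ => ?_
    have h := add_one_le_exp ((a - 1) * (j + 1 : ℝ)⁻¹)
    push_cast
    calc (a + j) / (j + 1) = (a - 1) * (j + 1 : ℝ)⁻¹ + 1 := by field_simp; ring
      _ ≤ _ := h
  have hlog : log n ≤ harmonic n :=
    (log_le_log hn0 (by push_cast; linarith : (n : ℝ) ≤ ((n + 1 : ℕ) : ℝ))).trans
      (by exact_mod_cast log_add_one_le_harmonic n)
  calc Ring.multichoose a n ≤ exp ((a - 1) * harmonic n) := hexp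
    _ ≤ exp ((a - 1) * log n) := exp_le_exp.mpr (mul_le_mul_of_nonpos_left hlog (by linarith))
    _ = (n : ℝ) ^ (a - 1) := by rw [rpow_def_of_pos hn0, mul_comm]

end Real

noncomputable def gammaApprox (n : ℕ) (s : ℝ) : ℝ := (n : ℝ) ^ (1 - s) * Ring.multichoose s n

theorem gammaApprox_nonneg {s : ℝ} (hs : 0 ≤ s) (n : ℕ) : 0 ≤ gammaApprox n s :=
  mul_nonneg (rpow_nonneg n.cast_nonneg _) (multichoose_nonneg_s10 hs n)

theorem gammaApprox_eq_div_GammaSeq {s : ℝ} (hs : 0 < s) {n : ℕ} (hn : 1 ≤ n) :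
    gammaApprox n s = n / (s + n) / GammaSeq s n := by
  have hn0 : (0 : ℝ) < n := by exact_mod_cast hn
  have hprod : ∏ j ∈ range n, (s + j) = n.factorial * Ring.multichoose s n := by
    rw [multichoose_eq_prod, prod_div_distrib, ← prod_range_add_one_eq_factorial]
    push_cast
    rw [mul_div_cancel₀ _ (prod_ne_zero_iff.mpr fun j _ => by positivity)]
  rw [gammaApprox, GammaSeq, prod_range_succ, hprod, rpow_sub hn0, rpow_one]
  field_simp

theorem tendsto_gammaApprox {s : ℝ} (hs : 0 < s) :
    Tendsto (gammaApprox · s) atTop (𝓝 (1 / Gamma s)) := by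
  have h : Tendsto (fun n : ℕ => (n : ℝ) / (s + n)) atTop (𝓝 1) := by
    simpa [add_comm] using tendsto_natCast_div_add_atTop (𝕜 := ℝ) s
  refine (h.div (GammaSeq_tendsto_Gamma s) (Gamma_pos_of_pos hs).ne').congr' ?_
  filter_upwards [eventually_ge_atTop 1] with n hn
  exact (gammaApprox_eq_div_GammaSeq hs hn).symm

theorem gammaApprox_le_one {s : ℝ} (hs0 : 0 ≤ s) (hs1 : s ≤ 1) {n : ℕ} (hn : 1 ≤ n) :
    gammaApprox n s ≤ 1 := by
  have hn0 : (0 : ℝ) < n := by exact_mod_cast hn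
  calc gammaApprox n s ≤ (n : ℝ) ^ (1 - s) * (n : ℝ) ^ (s - 1) :=
        mul_le_mul_of_nonneg_left (multichoose_le_rpow hs0 hs1 hn) (by positivity)
    _ = 1 := by rw [← rpow_add hn0]; simp

theorem gammaApprox_succ_le {s : ℝ} (hs : 1 ≤ s) {n : ℕ} (hn : 1 ≤ n) :
    gammaApprox (n + 1) s ≤ gammaApprox n s := by
  have hn0 : (0 : ℝ) < n := by exact_mod_cast hn
  have hn1 : (-1 : ℝ) ≤ 1 / n := by linarith [one_div_nonneg.mpr hn0.le]
  have hB := one_add_mul_self_le_rpow_one_add hn1 hs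
  rw [show 1 + 1 / (n : ℝ) = (n + 1) / n by field_simp, div_rpow (by positivity) hn0.le,
    le_div_iff₀ (by positivity)] at hB
  calc gammaApprox (n + 1) s = (s + n) / ((n : ℝ) + 1) ^ s * Ring.multichoose s n := by
        rw [gammaApprox, multichoose_succ]
        push_cast
        rw [rpow_sub (by positivity), rpow_one]
        field_simp
    _ ≤ n / (n : ℝ) ^ s * Ring.multichoose s n := by
        gcongr ?_ * _
        · exact multichoose_nonneg_s10 (by linarith) n
        rw [div_le_div_iff₀ (by positivity) (by positivity)]
        field_simp at hB
        linarith
    _ = gammaApprox n s := by rw [gammaApprox, rpow_sub hn0, rpow_one]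

theorem gammaApprox_le_ite {s : ℝ} (hs : 0 ≤ s) {m n : ℕ} (hm : 1 ≤ m) (hmn : m ≤ n) :
    gammaApprox n s ≤ if s ≤ 1 then 1 else gammaApprox m s := by
  split_ifs with h
  · exact gammaApprox_le_one hs h (hm.trans hmn)
  · exact antitoneOn_nat_Ici_of_succ_le (f := (gammaApprox · s))
      (fun k hk => gammaApprox_succ_le (not_le.mp h).le hk) hm (hm.trans hmn) hmn

theorem summable_pow_mul_multichoose_s10 {α c : ℝ} (hα : 0 ≤ α) (hc0 : 0 ≤ c) (hc1 : c < 1)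
    (n : ℕ) : Summable fun k : ℕ => c ^ k * Ring.multichoose ((k + 1) * α) n := by
  have hc : ‖c‖ < 1 := by rwa [norm_of_nonneg hc0]
  refine .of_norm_bounded_eventually_nat
    ((summable_pow_mul_geometric_of_norm_lt_one n hc).mul_left ((2 + 2 * α) ^ n)) ?_
  filter_upwards [eventually_ge_atTop 1] with k hk
  have hk1 : (1 : ℝ) ≤ k := by exact_mod_cast hk
  have hmc := multichoose_nonneg_s10 (by positivity : 0 ≤ ((k : ℝ) + 1) * α) n
  rw [norm_of_nonneg (by positivity)]
  calc c ^ k * Ring.multichoose ((k + 1) * α) n ≤ c ^ k * (1 + (k + 1) * α) ^ n := by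
        gcongr
        exact multichoose_le_one_add_pow (by positivity) n
    _ ≤ c ^ k * ((2 + 2 * α) * k) ^ n := by gcongr; nlinarith
    _ = (2 + 2 * α) ^ n * ((k : ℝ) ^ n * c ^ k) := by rw [mul_pow]; ring

theorem pow_mul_gammaApprox (x α : ℝ) {n : ℕ} (hn : 1 ≤ n) (k : ℕ) :
    x ^ k * gammaApprox n ((k + 1) * α) =
      (n : ℝ) ^ (1 - α) * ((x / (n : ℝ) ^ α) ^ k * Ring.multichoose ((k + 1) * α) n) := by
  have hn0 : (0 : ℝ) < n := by exact_mod_cast hn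
  have hpow : (n : ℝ) ^ (1 - (k + 1) * α) = (n : ℝ) ^ (1 - α) / ((n : ℝ) ^ α) ^ k := by
    rw [← rpow_natCast, ← rpow_mul hn0.le, ← rpow_sub hn0]
    ring_nf
  rw [gammaApprox, hpow, div_pow]
  field_simp

theorem summable_pow_mul_gammaApprox {α x : ℝ} (hα : 0 ≤ α) (hx : 0 ≤ x) {m : ℕ} (hm : 1 ≤ m)
    (hxm : x < (m : ℝ) ^ α) : Summable fun k : ℕ => x ^ k * gammaApprox m ((k + 1) * α) := by
  have hma : (0 : ℝ) < (m : ℝ) ^ α := by positivity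
  simp_rw [pow_mul_gammaApprox x α hm]
  exact (summable_pow_mul_multichoose_s10 hα (by positivity) ((div_lt_one hma).mpr hxm) m).mul_left _

theorem eventually_lt_natCast_rpow {α : ℝ} (hα : 0 < α) (x : ℝ) :
    ∀ᶠ n : ℕ in atTop, x < (n : ℝ) ^ α :=
  ((tendsto_rpow_atTop hα).comp tendsto_natCast_atTop_atTop).eventually_gt_atTop x

theorem tendsto_tsum_pow_mul_gammaApprox {α : ℝ} (hα : 0 < α) (y : ℝ) :
    Tendsto (fun n : ℕ => ∑' k : ℕ, y ^ k * gammaApprox n ((k + 1) * α)) atTop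
      (𝓝 (mittagLeffler α α y)) := by
  obtain ⟨m, hm, hym⟩ :=
    ((eventually_ge_atTop 1).and (eventually_lt_natCast_rpow hα |y|)).exists
  set bound : ℕ → ℝ :=
    fun k => |y| ^ k * if (k + 1) * α ≤ 1 then 1 else gammaApprox m ((k + 1) * α)
  -- only finitely many `k` have `(k + 1) * α ≤ 1`
  have hbound : Summable bound := by
    refine (summable_pow_mul_gammaApprox hα.le (abs_nonneg y) hm hym).congr_cofinite ?_
    have hlarge : Tendsto (fun k : ℕ => ((k : ℝ) + 1) * α) atTop atTop :=
      (tendsto_atTop_add_const_right _ 1 tendsto_natCast_atTop_atTop).atTop_mul_const hα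
    rw [Nat.cofinite_eq_atTop]
    filter_upwards [hlarge.eventually_gt_atTop 1] with k hk
    simp [bound, not_le.mpr hk]
  have hE : mittagLeffler α α y = ∑' k : ℕ, y ^ k * (1 / Gamma ((k + 1) * α)) :=
    tsum_congr fun k => by rw [mul_one_div, add_mul, one_mul]
  rw [hE]
  refine tendsto_tsum_of_dominated_convergence hbound
    (fun k => (tendsto_gammaApprox (by positivity)).const_mul _) ?_
  filter_upwards [eventually_ge_atTop m] with n hn k
  rw [norm_mul, norm_pow, norm_eq_abs, norm_of_nonneg (gammaApprox_nonneg (by positivity) n)]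
  exact mul_le_mul_of_nonneg_left (gammaApprox_le_ite (by positivity) hm hn) (by positivity)

theorem nonneg_of_add_mul_sum_antidiagonal_eq {p ρ F : ℕ → ℝ} {c : ℝ} (hc : 0 ≤ c)
    (hp : ∀ n, 0 ≤ p n) (hp_succ : ∀ n, p (n + 1) = ρ n * p n) (hρ : Monotone ρ)
    (hρ₀ : 0 ≤ ρ 0) (hF : ∀ n, F n + c * ∑ ij ∈ antidiagonal n, p ij.1 * F ij.2 = p n)
    (n : ℕ) : 0 ≤ F n := by
  have hcp : 0 < 1 + c * p 0 := by nlinarith [hp 0]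
  induction n using Nat.strong_induction_on with
  | _ n ih =>
  refine (mul_nonneg_iff_of_pos_left hcp).mp ?_
  cases n with
  | zero =>
    have h := hF 0
    simp only [Nat.antidiagonal_zero, sum_singleton] at h
    rw [show (1 + c * p 0) * F 0 = p 0 by linear_combination h]
    exact hp 0
  | succ n =>
    -- the equation at `n + 1` minus `ρ n` times the equation at `n`
    have hstep : (1 + c * p 0) * F (n + 1) =
        ρ n * F n + c * ∑ ij ∈ antidiagonal n, (ρ n - ρ ij.1) * p ij.1 * F ij.2 := by
      have h := hF (n + 1)
      rw [Nat.sum_antidiagonal_succ, hp_succ, ← hF n] at h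
      simp only [hp_succ, sub_mul, sum_sub_distrib, mul_assoc, ← mul_sum] at h ⊢
      linear_combination h
    have hρn : 0 ≤ ρ n := hρ₀.trans (hρ n.zero_le)
    have hsum : 0 ≤ ∑ ij ∈ antidiagonal n, (ρ n - ρ ij.1) * p ij.1 * F ij.2 :=
      sum_nonneg fun ij hij => mul_nonneg
        (mul_nonneg (sub_nonneg.mpr (hρ (HasAntidiagonal.antidiagonal.fst_le hij))) (hp _))
        (ih _ (Nat.antidiagonal.snd_lt hij))
    rw [hstep]
    exact add_nonneg (mul_nonneg hρn (ih n n.lt_succ_self)) (mul_nonneg hc hsum)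

/-- The `n`-th Taylor coefficient of `1 / (c + (1 - z) ^ α) = ∑ₖ (-c) ^ k (1 - z) ^ (-(k + 1) α)`;
`Ring.multichoose a n` is the `n`-th coefficient of `(1 - z) ^ (-a)`. -/
noncomputable def resolventCoeff (α c : ℝ) (n : ℕ) : ℝ :=
  ∑' k : ℕ, (-c) ^ k * Ring.multichoose ((k + 1) * α) n

section resolventCoeff

variable {α c : ℝ}

theorem summable_neg_pow_mul_multichoose (hα : 0 ≤ α) (hc0 : 0 ≤ c) (hc1 : c < 1) (n : ℕ) :
    Summable fun k : ℕ => (-c) ^ k * Ring.multichoose ((k + 1) * α) n := by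
  refine .of_norm ((summable_pow_mul_multichoose_s10 hα hc0 hc1 n).congr fun k => ?_)
  rw [norm_mul, norm_pow, norm_neg, norm_of_nonneg hc0,
    norm_of_nonneg (multichoose_nonneg_s10 (by positivity) n)]

theorem resolventCoeff_add_mul_sum (hα : 0 ≤ α) (hc0 : 0 ≤ c) (hc1 : c < 1) (n : ℕ) :
    resolventCoeff α c n +
        c * ∑ ij ∈ antidiagonal n, Ring.multichoose α ij.1 * resolventCoeff α c ij.2 =
      Ring.multichoose α n := by
  have hs := summable_neg_pow_mul_multichoose hα hc0 hc1
  have hconv : ∑ ij ∈ antidiagonal n, Ring.multichoose α ij.1 * resolventCoeff α c ij.2 =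
      ∑' k : ℕ, (-c) ^ k * Ring.multichoose ((k + 1 + 1) * α) n := by
    simp_rw [resolventCoeff, ← tsum_mul_left]
    rw [← Summable.tsum_finsetSum fun (ij : ℕ × ℕ) _ =>
      (hs ij.2).mul_left (Ring.multichoose α ij.1)]
    refine tsum_congr fun k => ?_
    rw [show ((k : ℝ) + 1 + 1) * α = α + (k + 1) * α by ring, Ring.multichoose_add, mul_sum]
    exact sum_congr rfl fun ij _ => by ring
  have hshift : resolventCoeff α c n = Ring.multichoose α n -
      ∑' k : ℕ, c * ((-c) ^ k * Ring.multichoose ((k + 1 + 1) * α) n) := by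
    rw [resolventCoeff, (hs n).tsum_eq_zero_add, sub_eq_add_neg, ← tsum_neg]
    congr 1
    · simp
    · exact tsum_congr fun k => by push_cast; ring
  rw [hconv, hshift, tsum_mul_left]
  ring

theorem resolventCoeff_nonneg (hα0 : 0 ≤ α) (hα1 : α ≤ 1) (hc0 : 0 ≤ c) (hc1 : c < 1)
    (n : ℕ) : 0 ≤ resolventCoeff α c n := by
  refine nonneg_of_add_mul_sum_antidiagonal_eq (ρ := fun j => (α + j) / (j + 1)) hc0
    (multichoose_nonneg_s10 hα0) (multichoose_succ α) (monotone_nat_of_le_succ fun j => ?_)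
    (by simpa using hα0) (resolventCoeff_add_mul_sum hα0 hc0 hc1) n
  rw [div_le_div_iff₀ (by positivity) (by positivity)]
  push_cast
  nlinarith

theorem resolventCoeff_le (hα0 : 0 ≤ α) (hα1 : α ≤ 1) (hc0 : 0 ≤ c) (hc1 : c < 1) (n : ℕ) :
    resolventCoeff α c n ≤ Ring.multichoose α n := by
  rw [← resolventCoeff_add_mul_sum hα0 hc0 hc1 n, le_add_iff_nonneg_right]
  exact mul_nonneg hc0 (sum_nonneg fun ij _ =>
    mul_nonneg (multichoose_nonneg_s10 hα0 _) (resolventCoeff_nonneg hα0 hα1 hc0 hc1 _))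

end resolventCoeff

theorem tsum_neg_pow_mul_gammaApprox (α x : ℝ) {n : ℕ} (hn : 1 ≤ n) :
    ∑' k : ℕ, (-x) ^ k * gammaApprox n ((k + 1) * α) =
      (n : ℝ) ^ (1 - α) * resolventCoeff α (x / (n : ℝ) ^ α) n := by
  rw [resolventCoeff, ← tsum_mul_left]
  exact tsum_congr fun k => by rw [pow_mul_gammaApprox _ _ hn, neg_div]

theorem mittagLeffler_neg_mem_Icc {α x : ℝ} (hα0 : 0 < α) (hα1 : α ≤ 1) (hx : 0 ≤ x) :
    mittagLeffler α α (-x) ∈ Set.Icc 0 1 := by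
  refine isClosed_Icc.mem_of_tendsto (tendsto_tsum_pow_mul_gammaApprox hα0 (-x)) ?_
  filter_upwards [eventually_ge_atTop 1, eventually_lt_natCast_rpow hα0 x] with n hn hxn
  have hna : (0 : ℝ) < (n : ℝ) ^ α := by positivity
  have hc0 : 0 ≤ x / (n : ℝ) ^ α := by positivity
  have hc1 : x / (n : ℝ) ^ α < 1 := (div_lt_one hna).mpr hxn
  rw [tsum_neg_pow_mul_gammaApprox α x hn]
  refine ⟨mul_nonneg (by positivity) (resolventCoeff_nonneg hα0.le hα1 hc0 hc1 n), ?_⟩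
  calc (n : ℝ) ^ (1 - α) * resolventCoeff α (x / (n : ℝ) ^ α) n
      ≤ gammaApprox n α :=
        mul_le_mul_of_nonneg_left (resolventCoeff_le hα0.le hα1 hc0 hc1 n) (by positivity)
    _ ≤ 1 := gammaApprox_le_one hα0.le hα1 hn

theorem intervalIntegral.integral_le_of_mem_Icc {f g : ℝ → ℝ} {a b : ℝ} (hab : a ≤ b)
    (hg : IntervalIntegrable g volume a b) (hf : ∀ x ∈ Set.Ioc a b, f x ∈ Set.Icc 0 (g x)) :
    ∫ x in a..b, f x ≤ ∫ x in a..b, g x := by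
  rw [integral_of_le hab, integral_of_le hab]
  exact integral_mono_of_nonneg
    (ae_restrict_of_forall_mem measurableSet_Ioc fun x hx => (hf x hx).1)
    ((intervalIntegrable_iff_integrableOn_Ioc_of_le hab).mp hg)
    (ae_restrict_of_forall_mem measurableSet_Ioc fun x hx => (hf x hx).2)

theorem intervalIntegrable_sub_rpow {r : ℝ} (hr : -1 < r) (t : ℝ) :
    IntervalIntegrable (fun τ : ℝ => (t - τ) ^ r) volume 0 t := by
  simpa using ((intervalIntegrable_rpow' hr (a := 0) (b := t)).comp_sub_left t).symm

theorem integral_sub_rpow {r : ℝ} (hr : -1 < r) (t : ℝ) :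
    ∫ τ in (0 : ℝ)..t, (t - τ) ^ r = t ^ (r + 1) / (r + 1) := by
  rw [intervalIntegral.integral_comp_sub_left (fun x : ℝ => x ^ r) t, sub_self, sub_zero,
    integral_rpow (.inl hr), zero_rpow (by linarith), sub_zero]

theorem I1_integrand_mem_Icc {α H lam t τ : ℝ} (hα0 : 0 < α) (hα1 : α ≤ 1) (hH : H ≤ 1 / 2)
    (hlam : 0 ≤ lam) (hτ : τ ∈ Set.Ioc 0 t) (r : ℝ) :
    (t / τ) ^ (2 * H - 1) * (t - τ) ^ r * (mittagLeffler α α (-lam * (t - τ) ^ α)) ^ 2 ∈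
      Set.Icc 0 ((t - τ) ^ r) := by
  obtain ⟨hτ0, hτt⟩ := hτ
  have hkernel0 : 0 ≤ (t / τ) ^ (2 * H - 1) := rpow_nonneg (div_nonneg (hτ0.le.trans hτt) hτ0.le) _
  have hkernel1 : (t / τ) ^ (2 * H - 1) ≤ 1 :=
    rpow_le_one_of_one_le_of_nonpos ((one_le_div hτ0).mpr hτt) (by linarith)
  have hpow : 0 ≤ (t - τ) ^ r := rpow_nonneg (sub_nonneg.mpr hτt) r
  obtain ⟨hE0, hE1⟩ := mittagLeffler_neg_mem_Icc hα0 hα1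
    (mul_nonneg hlam (rpow_nonneg (sub_nonneg.mpr hτt) α))
  rw [neg_mul]
  refine ⟨by positivity, ?_⟩
  calc _ ≤ 1 * (t - τ) ^ r * 1 ^ 2 := by gcongr
    _ = (t - τ) ^ r := by ring

theorem I1_bound_general (α H : ℝ) (hH1 : H < 1/2) (hα0 : 0 < α) (hα1 : α ≤ 1)
    (hαH : 1 < α + H) :
    ∃ C : ℝ, 0 < C ∧ ∀ lam t : ℝ, 0 < lam → 0 < t →
      (∫ τ in (0:ℝ)..t, (t / τ) ^ (2*H - 1) * (t - τ) ^ (2*α + 2*H - 3)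
          * (mittagLeffler α α (-lam * (t - τ) ^ α)) ^ 2)
        ≤ C * t ^ (2*α + 2*H - 2) := by
  have hr : -1 < 2*α + 2*H - 3 := by linarith
  refine ⟨1 / (2*α + 2*H - 2), one_div_pos.mpr (by linarith), fun lam t hlam ht => ?_⟩
  calc _ ≤ ∫ τ in (0:ℝ)..t, (t - τ) ^ (2*α + 2*H - 3) :=
        intervalIntegral.integral_le_of_mem_Icc ht.le (intervalIntegrable_sub_rpow hr t)
          fun τ hτ => I1_integrand_mem_Icc hα0 hα1 hH1.le hlam.le hτ _
    _ = t ^ (2*α + 2*H - 3 + 1) / (2*α + 2*H - 3 + 1) := integral_sub_rpow hr t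
    _ = 1 / (2*α + 2*H - 2) * t ^ (2*α + 2*H - 2) := by ring_nf

theorem I1_bound (α H : ℝ) (hH0 : 0 < H) (hH1 : H < 1/2) (hα0 : 0 < α) (hα1 : α ≤ 1)
    (hαH : 1 < α + H) :
    ∃ C : ℝ, 0 < C ∧ ∀ lam t : ℝ, 0 < lam → 0 < t →
      (∫ τ in (0:ℝ)..t, (t / τ) ^ (2*H - 1) * (t - τ) ^ (2*α + 2*H - 3)
          * (mittagLeffler α α (-lam * (t - τ) ^ α)) ^ 2)
        ≤ C * t ^ (2*α + 2*H - 2) :=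
  I1_bound_general α H hH1 hα0 hα1 hαH
end
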